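/- arXiv:2309.11474 — 8 statements merged into one kernel-verified Lean document; each statement's English description precedes it below -/
import Mathlib

section
/- For every integer n ≥ 3, two distinct vertices (i,x) and (j,y) of the Praeger–Xu graph PX(n,1) are twins if and only if either i = j (they lie in the same fibre), or n = 4 and i - j = 2 in ZMod 4 (they lie in antipodal fibres). -/
/-- The Praeger–Xu graph `PX(n,k)`: vertices are pairs `(i,x)` with `i : ZMod n` and
`x : Fin k → ZMod 2`; `(i,x)` and `(j,y)` are adjacent iff `j = i+1` and `y t = x (t+1)`
for all `0 ≤ t ≤ k-2`, or symmetrically `i = j+1` and `x t = y (t+1)` for all such `t`. -/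
def PX (n k : ℕ) : SimpleGraph (ZMod n × (Fin k → ZMod 2)) :=
  SimpleGraph.fromRel (fun u v =>
    v.1 = u.1 + 1 ∧ ∀ (t : ℕ) (ht : t + 1 < k),
      v.2 ⟨t, Nat.lt_of_succ_lt ht⟩ = u.2 ⟨t + 1, ht⟩)

/-- Two distinct vertices `(i,x)` and `(j,y)` of `PX(n,1)` are twins (have the same open
neighborhood) iff they are in the same fibre, or `n = 4` and they are in antipodal fibres. -/
theorem PX_n_one_twins_iff (n : ℕ) (hn : 3 ≤ n) (i j : ZMod n) (x y : Fin 1 → ZMod 2)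
    (hne : ((i, x) : ZMod n × (Fin 1 → ZMod 2)) ≠ (j, y)) :
    (PX n 1).neighborSet (i, x) = (PX n 1).neighborSet (j, y) ↔
      i = j ∨ (n = 4 ∧ i - j = 2) := by
  haveI : NeZero n := ⟨by omega⟩
  haveI : Fact (1 < n) := ⟨by omega⟩
  have h1 : ∀ a : ZMod n, a + 1 ≠ a := by
    intro a h
    exact one_ne_zero (by linear_combination h)
  have adj : ∀ u v : ZMod n × (Fin 1 → ZMod 2),
      (PX n 1).Adj u v ↔ (v.1 = u.1 + 1 ∨ u.1 = v.1 + 1) := by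
    intro u v
    rw [PX, SimpleGraph.fromRel_adj]
    constructor
    · rintro ⟨-, (⟨h, -⟩ | ⟨h, -⟩)⟩
      · exact Or.inl h
      · exact Or.inr h
    · intro h
      refine ⟨fun he => ?_, ?_⟩
      · subst he
        rcases h with h | h <;> exact h1 u.1 h.symm
      · rcases h with h | h
        · exact Or.inl ⟨h, fun t ht => absurd ht (by omega)⟩
        · exact Or.inr ⟨h, fun t ht => absurd ht (by omega)⟩
    
  constructor
  · intro hset
    have m1 : ((i + 1, x) : ZMod n × (Fin 1 → ZMod 2)) ∈ (PX n 1).neighborSet (i, x) :=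
      (adj _ _).mpr (Or.inl rfl)
    have m2 : ((i - 1, x) : ZMod n × (Fin 1 → ZMod 2)) ∈ (PX n 1).neighborSet (i, x) :=
      (adj _ _).mpr (Or.inr (by ring))
    rw [hset] at m1 m2
    have h1' := (adj _ _).mp m1
    have h2' := (adj _ _).mp m2
    simp only at h1' h2'
    rcases h1' with h | h
    · exact Or.inl (by linear_combination h)
    · rcases h2' with h2 | h2
      · right
        have h4 : (4 : ZMod n) = 0 := by
          rw [h] at h2
          linear_combination -h2
        have hdvd : n ∣ 4 := by
          have := (ZMod.natCast_eq_zero_iff 4 n).mp (by exact_mod_cast h4)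
          exact this
        have hle : n ≤ 4 := Nat.le_of_dvd (by norm_num) hdvd
        have hn4 : n = 4 := by interval_cases n <;> omega
        exact ⟨hn4, by linear_combination -h - h4⟩
      · exact Or.inl (by linear_combination -h2)
  · intro h
    ext ⟨a, z⟩
    simp only [SimpleGraph.mem_neighborSet, adj]
    rcases h with h | ⟨h4, h2⟩
    · rw [h]
    · have h40 : (4 : ZMod n) = 0 := by subst h4; decide
      constructor <;> rintro (h | h)
      · exact Or.inr (by linear_combination -h2 - h - h40)
      · exact Or.inl (by linear_combination -h + h2)
      · exact Or.inr (by linear_combination h2 - h)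
      · exact Or.inl (by linear_combination -h - h2 - h40)
end

section
/- For all integers n ≥ 3 and 2 ≤ k < n, the Praeger–Xu graph PX(n,k) is twin-free: any two distinct vertices have distinct open neighborhoods. -/
/-- Forward neighbour of `(i,x)` with free last coordinate `b`. -/
def PXfwd (n k : ℕ) (i : ZMod n) (x : Fin k → ZMod 2) (b : ZMod 2) :
    ZMod n × (Fin k → ZMod 2) :=
  (i + 1, fun t => if ht : (t : ℕ) + 1 < k then x ⟨(t : ℕ) + 1, ht⟩ else b)

/-- Backward neighbour of `(i,x)` with free first coordinate `b`. -/
def PXbwd (n k : ℕ) (i : ZMod n) (x : Fin k → ZMod 2) (b : ZMod 2) :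
    ZMod n × (Fin k → ZMod 2) :=
  (i - 1, fun t => if _ : (t : ℕ) = 0 then b
    else x ⟨(t : ℕ) - 1, lt_of_le_of_lt (Nat.sub_le _ _) t.isLt⟩)

/-- For `n ≥ 3` and `2 ≤ k < n`, the graph `PX(n,k)` is twin-free: distinct vertices have
distinct open neighborhoods. -/
theorem PX_twin_free (n k : ℕ) (hn : 3 ≤ n) (hk : 2 ≤ k) (hkn : k < n)
    (u v : ZMod n × (Fin k → ZMod 2)) (huv : u ≠ v) :
    (PX n k).neighborSet u ≠ (PX n k).neighborSet v := by
  intro h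
  haveI : NeZero n := ⟨by omega⟩
  have h1 : (1 : ZMod n) ≠ 0 := by
    intro h0
    have h1' : ((1 : ℕ) : ZMod n) = 0 := by exact_mod_cast h0
    have hd := (ZMod.natCast_eq_zero_iff 1 n).mp h1'
    have := Nat.le_of_dvd one_pos hd
    omega
  have h2 : (2 : ZMod n) ≠ 0 := by
    intro h0
    have h2' : ((2 : ℕ) : ZMod n) = 0 := by exact_mod_cast h0
    have hd := (ZMod.natCast_eq_zero_iff 2 n).mp h2'
    have := Nat.le_of_dvd two_pos hd
    omega
  obtain ⟨i, x⟩ := u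
  obtain ⟨j, y⟩ := v
  -- the forward neighbours of (i,x) are adjacent to (i,x)
  have hFadj : ∀ b, (PX n k).Adj (i, x) (PXfwd n k i x b) := by
    intro b
    rw [PX, SimpleGraph.fromRel_adj]
    refine ⟨?_, Or.inl ⟨rfl, ?_⟩⟩
    · intro he
      have hfst := congrArg Prod.fst he
      simp only [PXfwd] at hfst
      exact h1 (left_eq_add.mp hfst)
    · intro t ht
      simp only [PXfwd]
      rw [dif_pos ht]
  -- the backward neighbours of (i,x) are adjacent to (i,x)
  have hBadj : ∀ b, (PX n k).Adj (i, x) (PXbwd n k i x b) := by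
    intro b
    rw [PX, SimpleGraph.fromRel_adj]
    refine ⟨?_, Or.inr ⟨(sub_add_cancel i 1).symm, ?_⟩⟩
    · intro he
      have hfst := congrArg Prod.fst he
      simp only [PXbwd] at hfst
      exact h1 (sub_eq_self.mp hfst.symm)
    · intro t ht
      simp only [PXbwd]
      rw [dif_neg (Nat.succ_ne_zero t)]
      rfl
  -- hence they are adjacent to (j,y) as well
  have hFv : ∀ b, (PX n k).Adj (j, y) (PXfwd n k i x b) := by
    intro b
    have hm : PXfwd n k i x b ∈ (PX n k).neighborSet (i, x) := hFadj b
    rw [h] at hm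
    exact hm
  have hBv : ∀ b, (PX n k).Adj (j, y) (PXbwd n k i x b) := by
    intro b
    have hm : PXbwd n k i x b ∈ (PX n k).neighborSet (i, x) := hBadj b
    rw [h] at hm
    exact hm
  have hFv0 := hFv 0
  have hFv1 := hFv 1
  rw [PX, SimpleGraph.fromRel_adj] at hFv0 hFv1
  have key : i = j ∧ ∀ (t : ℕ) (ht : t + 1 < k), x ⟨t + 1, ht⟩ = y ⟨t + 1, ht⟩ := by
    rcases hFv0.2 with hL | hR0
    · refine ⟨add_right_cancel hL.1, fun t ht => ?_⟩
      have := hL.2 t ht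
      simp only [PXfwd] at this
      rwa [dif_pos ht] at this
    · rcases hFv1.2 with hL | hR1
      · refine ⟨add_right_cancel hL.1, fun t ht => ?_⟩
        have := hL.2 t ht
        simp only [PXfwd] at this
        rwa [dif_pos ht] at this
      · exfalso
        have ht : (k - 2) + 1 < k := by omega
        have e0 := hR0.2 (k - 2) ht
        have e1 := hR1.2 (k - 2) ht
        simp only [PXfwd] at e0 e1
        rw [dif_neg (by omega : ¬ ((k - 2) + 1 + 1 < k))] at e0
        rw [dif_neg (by omega : ¬ ((k - 2) + 1 + 1 < k))] at e1
        exact zero_ne_one (e0.symm.trans e1)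
  obtain ⟨hij, hhigh⟩ := key
  have hBv0 := hBv 0
  rw [PX, SimpleGraph.fromRel_adj] at hBv0
  have hlow : ∀ (t : ℕ) (ht : t + 1 < k),
      y ⟨t, Nat.lt_of_succ_lt ht⟩ = x ⟨t, Nat.lt_of_succ_lt ht⟩ := by
    rcases hBv0.2 with hL | hR
    · exfalso
      have hfst : i - 1 = j + 1 := hL.1
      rw [← hij] at hfst
      have hc : (2 : ZMod n) = (i + 1) - (i - 1) := by ring
      rw [← hfst, sub_self] at hc
      exact h2 hc
    · intro t ht
      have := hR.2 t ht
      simp only [PXbwd] at this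
      rw [dif_neg (Nat.succ_ne_zero t)] at this
      exact this
  have hxy : ∀ (m : ℕ) (hm : m < k), x ⟨m, hm⟩ = y ⟨m, hm⟩ := by
    intro m hm
    by_cases hm1 : m + 1 < k
    · exact (hlow m hm1).symm
    · obtain ⟨m', rfl⟩ : ∃ m', m = m' + 1 := ⟨m - 1, by omega⟩
      exact hhigh m' hm
  have hxy' : x = y := funext fun t => hxy t.1 t.2
  exact huv (by rw [hij, hxy'])
end

section
/- The Praeger–Xu graph PX(4,1) has determining number Det(PX(4,1)) = 6 and distinguishing number Dist(PX(4,1)) = 5. -/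
/-- `S` is a determining set for `G`: the identity is the only automorphism of `G`
fixing every vertex of `S` pointwise. -/
def IsDeterminingSet {V : Type*} (G : SimpleGraph V) (S : Set V) : Prop :=
  ∀ φ : G ≃g G, (∀ v ∈ S, φ v = v) → ∀ v, φ v = v

/-- The determining number of `G`: the minimum size of a determining set. -/
noncomputable def detNum {V : Type*} (G : SimpleGraph V) : ℕ :=
  sInf {m | ∃ S : Set V, S.ncard = m ∧ IsDeterminingSet G S}

/-- `c` is a distinguishing coloring of `G`: the identity is the only automorphism of `G`
preserving the coloring `c`. -/
def IsDistinguishing {V : Type*} {d : ℕ} (G : SimpleGraph V) (c : V → Fin d) : Prop :=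
  ∀ φ : G ≃g G, (∀ v, c (φ v) = c v) → ∀ v, φ v = v

/-- The distinguishing number of `G`: the least number of colors in a distinguishing
coloring of `G`. -/
noncomputable def distNum {V : Type*} (G : SimpleGraph V) : ℕ :=
  sInf {d | ∃ c : V → Fin d, IsDistinguishing G c}

private abbrev V4 : Type := ZMod 4 × (Fin 1 → ZMod 2)

private def par (v : V4) : ℕ := v.1.val % 2

private lemma par01 (v : V4) : par v = 0 ∨ par v = 1 := by
  unfold par; omega

private lemma adj_iff (u v : V4) : (PX 4 1).Adj u v ↔ par u ≠ par v := by
  have hdec : ∀ u v : V4, (u ≠ v ∧ (v.1 = u.1 + 1 ∨ u.1 = v.1 + 1)) ↔ par u ≠ par v := by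
    decide
  rw [PX, SimpleGraph.fromRel_adj]
  constructor
  · rintro ⟨hne, h | h⟩
    · exact (hdec u v).1 ⟨hne, Or.inl h.1⟩
    · exact (hdec u v).1 ⟨hne, Or.inr h.1⟩
  · intro h
    obtain ⟨hne, h'⟩ := (hdec u v).2 h
    refine ⟨hne, h'.imp (fun h1 => ⟨h1, fun t ht => absurd ht (by omega)⟩)
      (fun h1 => ⟨h1, fun t ht => absurd ht (by omega)⟩)⟩

private lemma perm_par {φ : PX 4 1 ≃g PX 4 1} {a : V4} (ha : φ a = a) (v : V4) :
    par (φ v) = par v := by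
  have h : (PX 4 1).Adj (φ v) (φ a) ↔ (PX 4 1).Adj v a := φ.map_rel_iff
  rw [ha, adj_iff, adj_iff] at h
  have := par01 (φ v); have := par01 v; have := par01 a
  omega

private def swapIso (u w : V4) (hp : par u = par w) : PX 4 1 ≃g PX 4 1 :=
  ⟨Equiv.swap u w, @fun a b => by
    have hs : ∀ x, par (Equiv.swap u w x) = par x := by
      intro x
      rcases eq_or_ne x u with rfl | hxu
      · rw [Equiv.swap_apply_left]; exact hp.symm
      rcases eq_or_ne x w with rfl | hxw
      · rw [Equiv.swap_apply_right]; exact hp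
      · rw [Equiv.swap_apply_of_ne_of_ne hxu hxw]
    show (PX 4 1).Adj (Equiv.swap u w a) (Equiv.swap u w b) ↔ (PX 4 1).Adj a b
    rw [adj_iff, adj_iff, hs, hs]⟩


-- vertices
private def a0 : V4 := (0, fun _ => 0)
private def a1 : V4 := (0, fun _ => 1)
private def a2 : V4 := (2, fun _ => 0)
private def a3 : V4 := (2, fun _ => 1)
private def b0 : V4 := (1, fun _ => 0)
private def b1 : V4 := (1, fun _ => 1)
private def b2 : V4 := (3, fun _ => 0)
private def b3 : V4 := (3, fun _ => 1)

private lemma det_upper :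
    ∃ S : Set V4, S.ncard = 6 ∧ IsDeterminingSet (PX 4 1) S := by
  refine ⟨↑({a0, a1, a2, b0, b1, b2} : Finset V4), ?_, ?_⟩
  · rw [Set.ncard_coe_finset]; decide
  · intro φ hfix
    have hf : ∀ s : V4, s ∈ ({a0, a1, a2, b0, b1, b2} : Finset V4) → φ s = s := by
      intro s hs; exact hfix s (Finset.mem_coe.mpr hs)
    have ha0 := hf a0 (by decide)
    have ha1 := hf a1 (by decide)
    have ha2 := hf a2 (by decide)
    have hb0 := hf b0 (by decide)
    have hb1 := hf b1 (by decide)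
    have hb2 := hf b2 (by decide)
    have hpar := perm_par ha0
    have hne : ∀ s t : V4, φ s = s → t ≠ s → φ t ≠ s := by
      intro s t hs hts h
      exact hts (φ.injective (h.trans hs.symm))
    have hA : φ a3 = a3 := by
      have key : ∀ v : V4, (par v = 0 ∧ ¬(v = a0 ∨ v = a1 ∨ v = a2)) → v = a3 := by decide
      refine key _ ⟨(hpar a3).trans (by decide), ?_⟩
      rintro (h | h | h)
      · exact hne a0 a3 ha0 (by decide) h
      · exact hne a1 a3 ha1 (by decide) h
      · exact hne a2 a3 ha2 (by decide) h
    have hB : φ b3 = b3 := by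
      have key : ∀ v : V4, (par v = 1 ∧ ¬(v = b0 ∨ v = b1 ∨ v = b2)) → v = b3 := by decide
      refine key _ ⟨(hpar b3).trans (by decide), ?_⟩
      rintro (h | h | h)
      · exact hne b0 b3 hb0 (by decide) h
      · exact hne b1 b3 hb1 (by decide) h
      · exact hne b2 b3 hb2 (by decide) h
    intro v
    have hall : ∀ v : V4, v = a0 ∨ v = a1 ∨ v = a2 ∨ v = a3 ∨ v = b0 ∨ v = b1 ∨ v = b2 ∨ v = b3 := by
      decide
    rcases hall v with rfl|rfl|rfl|rfl|rfl|rfl|rfl|rfl <;> assumption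

private lemma swap_contra {S : Set V4} (hS : IsDeterminingSet (PX 4 1) S)
    {u w : V4} (hp : par u = par w) (huw : u ≠ w) (hu : u ∉ S) (hw : w ∉ S) : False := by
  have hfix : ∀ v ∈ S, swapIso u w hp v = v := by
    intro v hv
    show Equiv.swap u w v = v
    exact Equiv.swap_apply_of_ne_of_ne (fun h => hu (h ▸ hv)) (fun h => hw (h ▸ hv))
  have h2 : Equiv.swap u w u = u := hS (swapIso u w hp) hfix u
  rw [Equiv.swap_apply_left] at h2
  exact huw h2.symm

private lemma det_lower (m : ℕ)
    (h : ∃ S : Set V4, S.ncard = m ∧ IsDeterminingSet (PX 4 1) S) : 6 ≤ m := by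
  by_contra hlt
  push_neg at hlt
  obtain ⟨S, hcard, hS⟩ := h
  have hfin : S.Finite := S.toFinite
  set F := hfin.toFinset with hF
  have hFcard : F.card = m := by
    rw [← hcard, Set.ncard_eq_toFinset_card _ hfin]
  set P0 : Finset V4 := {a0, a1, a2, a3} with hP0
  set P1 : Finset V4 := {b0, b1, b2, b3} with hP1
  have hdisj : Disjoint (P0 \ F) (P1 \ F) :=
    Disjoint.mono (Finset.sdiff_subset) (Finset.sdiff_subset) (by decide)
  have hunion : (P0 \ F) ∪ (P1 \ F) = Finset.univ \ F := by
    rw [← Finset.union_sdiff_distrib, (by decide : P0 ∪ P1 = (Finset.univ : Finset V4))]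
  have hcu : (Finset.univ \ F).card = 8 - m := by
    rw [Finset.card_sdiff_of_subset (Finset.subset_univ F), hFcard,
      (by decide : (Finset.univ : Finset V4).card = 8)]
  have hsum : (P0 \ F).card + (P1 \ F).card = 8 - m := by
    rw [← Finset.card_union_of_disjoint hdisj, hunion, hcu]
  have hone : 2 ≤ (P0 \ F).card ∨ 2 ≤ (P1 \ F).card := by omega
  have hmem : ∀ x : V4, (x ∈ P0 → par x = 0) ∧ (x ∈ P1 → par x = 1) := by decide
  rcases hone with h2 | h2
  · obtain ⟨u, hu, w, hw, huw⟩ := Finset.one_lt_card.mp (show 1 < (P0 \ F).card by omega)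
    rw [Finset.mem_sdiff] at hu hw
    refine swap_contra hS ?_ huw (fun h => hu.2 (hfin.mem_toFinset.mpr h))
      (fun h => hw.2 (hfin.mem_toFinset.mpr h))
    exact ((hmem u).1 hu.1).trans ((hmem w).1 hw.1).symm
  · obtain ⟨u, hu, w, hw, huw⟩ := Finset.one_lt_card.mp (show 1 < (P1 \ F).card by omega)
    rw [Finset.mem_sdiff] at hu hw
    refine swap_contra hS ?_ huw (fun h => hu.2 (hfin.mem_toFinset.mpr h))
      (fun h => hw.2 (hfin.mem_toFinset.mpr h))
    exact ((hmem u).2 hu.1).trans ((hmem w).2 hw.1).symm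

private def cdist : V4 → Fin 5 := fun v =>
  if v = a0 then 0 else if v = a1 then 1 else if v = a2 then 2 else if v = a3 then 3
  else if v = b0 then 0 else if v = b1 then 1 else if v = b2 then 2 else 4

private lemma dist_upper : IsDistinguishing (PX 4 1) cdist := by
  intro φ hc
  have h3 : ∀ w : V4, cdist w = 3 → w = a3 := by decide
  have ha3 : φ a3 = a3 := h3 _ ((hc a3).trans (by decide))
  have hpar := perm_par ha3
  have key : ∀ v w : V4, (cdist w = cdist v ∧ par w = par v) → w = v := by decide
  exact fun v => key v (φ v) ⟨hc v, hpar v⟩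

private lemma dist_lower (d : ℕ) (h : ∃ c : V4 → Fin d, IsDistinguishing (PX 4 1) c) :
    5 ≤ d := by
  by_contra hlt
  push_neg at hlt
  obtain ⟨c, hdist⟩ := h
  by_cases hcol : ∃ u w : V4, u ≠ w ∧ par u = par w ∧ c u = c w
  · obtain ⟨u, w, huw, hp, hcuw⟩ := hcol
    have hpres : ∀ x, (swapIso u w hp) x = Equiv.swap u w x := fun _ => rfl
    have hfix : ∀ x, c ((swapIso u w hp) x) = c x := by
      intro x
      rw [hpres]
      rcases eq_or_ne x u with rfl | h1
      · rw [Equiv.swap_apply_left]; exact hcuw.symm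
      rcases eq_or_ne x w with rfl | h2
      · rw [Equiv.swap_apply_right]; exact hcuw
      · rw [Equiv.swap_apply_of_ne_of_ne h1 h2]
    have h2 : Equiv.swap u w u = u := hdist (swapIso u w hp) hfix u
    rw [Equiv.swap_apply_left] at h2
    exact huw h2.symm
  · push_neg at hcol
    have hinj : ∀ u w : V4, par u = par w → c u = c w → u = w := by
      intro u w hp hcc
      by_contra hne
      exact hcol u w hne hp hcc
    set A : Fin 4 → V4 := ![a0, a1, a2, a3] with hA
    set B : Fin 4 → V4 := ![b0, b1, b2, b3] with hB
    have hApar : ∀ i, par (A i) = 0 := by decide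
    have hBpar : ∀ i, par (B i) = 1 := by decide
    have hAne : ∀ i j : Fin 4, A i = A j → i = j := by decide
    have hBne : ∀ i j : Fin 4, B i = B j → i = j := by decide
    have hAinj : Function.Injective (fun i => c (A i)) := fun i j h =>
      hAne i j (hinj _ _ ((hApar i).trans (hApar j).symm) h)
    have hBinj : Function.Injective (fun i => c (B i)) := fun i j h =>
      hBne i j (hinj _ _ ((hBpar i).trans (hBpar j).symm) h)
    have hd4 : 4 ≤ d := by
      have := Fintype.card_le_of_injective _ hAinj
      simpa using this
    have hAbij : Function.Bijective (fun i => c (A i)) :=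
      (Fintype.bijective_iff_injective_and_card _).2 ⟨hAinj, by simp; omega⟩
    have hBbij : Function.Bijective (fun i => c (B i)) :=
      (Fintype.bijective_iff_injective_and_card _).2 ⟨hBinj, by simp; omega⟩
    have surj0 : ∀ x : Fin d, ∃ v : V4, par v = 0 ∧ c v = x := by
      intro x
      obtain ⟨i, hi⟩ := hAbij.2 x
      exact ⟨A i, hApar i, hi⟩
    have surj1 : ∀ x : Fin d, ∃ v : V4, par v = 1 ∧ c v = x := by
      intro x
      obtain ⟨i, hi⟩ := hBbij.2 x
      exact ⟨B i, hBpar i, hi⟩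
    choose w0 hw0p hw0c using surj0
    choose w1 hw1p hw1c using surj1
    set f : V4 → V4 := fun v => if par v = 0 then w1 (c v) else w0 (c v) with hf
    have hfc : ∀ v, c (f v) = c v := by
      intro v
      by_cases h : par v = 0
      · rw [hf]; simp only [h, if_pos]; exact hw1c (c v)
      · rw [hf]; simp only [h, if_neg, if_false]; exact hw0c (c v)
    have hfp : ∀ v, par (f v) = 1 - par v := by
      intro v
      by_cases h : par v = 0
      · rw [hf]; simp only [h, if_pos]; rw [hw1p (c v)]
      · have h1 : par v = 1 := (par01 v).resolve_left h
        rw [hf]; simp only [h, if_neg, if_false]; rw [hw0p (c v)]; omega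
    have hinv : Function.Involutive f := by
      intro v
      rcases par01 v with h | h
      · have h1 : f v = w1 (c v) := by rw [hf]; simp [h]
        have h2 : f (f v) = w0 (c (f v)) := by
          rw [hf]
          simp only
          rw [if_neg (by rw [hfp v, h]; omega)]
        rw [h2, hfc v]
        exact hinj _ _ ((hw0p (c v)).trans h.symm) (hw0c (c v))
      · have h2 : f (f v) = w1 (c (f v)) := by
          rw [hf]
          simp only
          rw [if_pos (by rw [hfp v, h])]
        rw [h2, hfc v]
        exact hinj _ _ ((hw1p (c v)).trans h.symm) (hw1c (c v))
    have hid : f a0 = a0 :=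
      hdist ⟨Function.Involutive.toPerm f hinv, @fun a b => by
        show (PX 4 1).Adj (f a) (f b) ↔ (PX 4 1).Adj a b
        rw [adj_iff, adj_iff, hfp, hfp]
        have := par01 a; have := par01 b
        omega⟩ (fun v => hfc v) a0
    have hp0 : par a0 = 0 := by decide
    have h5 := hfp a0
    rw [hid] at h5
    omega

/-- `PX(4,1)` has determining number `6` and distinguishing number `5`. -/
theorem det_dist_PX_four_one : detNum (PX 4 1) = 6 ∧ distNum (PX 4 1) = 5 := by
  constructor
  · have h6 : 6 ∈ {m | ∃ S : Set (ZMod 4 × (Fin 1 → ZMod 2)), S.ncard = m ∧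
        IsDeterminingSet (PX 4 1) S} := det_upper
    exact le_antisymm (Nat.sInf_le h6) (le_csInf ⟨6, h6⟩ fun m hm => det_lower m hm)
  · have h5 : 5 ∈ {d | ∃ c : (ZMod 4 × (Fin 1 → ZMod 2)) → Fin d,
        IsDistinguishing (PX 4 1) c} := ⟨cdist, dist_upper⟩
    exact le_antisymm (Nat.sInf_le h5) (le_csInf ⟨5, h5⟩ fun d hd => dist_lower d hd)
end

section
/- Let n ≥ 3, 1 ≤ k < n, and s, i, j ∈ ZMod n. Then: (1) the reflection μ_s maps the fibre F_i of PX(n,k) onto the fibre F_{s+1-k-i}; in particular, the fibres F_i and F_j are interchanged by μ_{i+j+k-1}. (2) If n is odd, there is exactly one i ∈ ZMod n with μ_s(F_i) = F_i; if n is even and s ≡ k (mod 2), there is no i with μ_s(F_i) = F_i; and if n is even and s ≢ k (mod 2), there are exactly two such i, and they differ by n/2 in ZMod n. -/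
/-- The fibre `F_i` of `PX(n,k)`: all vertices with first coordinate `i`. -/
def fibre (n k : ℕ) (i : ZMod n) : Set (ZMod n × (Fin k → ZMod 2)) :=
  {v | v.1 = i}

/-- The reflection `μ_s = ρ^(s+1-k) * μ`, so `μ_s(i,x) = (s+1-k-i, x⁻)`. -/
def muS (n k : ℕ) (s : ZMod n) : Equiv.Perm (ZMod n × (Fin k → ZMod 2)) :=
  Function.Involutive.toPerm
    (fun v => (s + 1 - (k : ZMod n) - v.1, fun t => v.2 t.rev))
    (fun v => by simp [Fin.rev_rev, sub_sub_cancel])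

lemma muS_image_fibre (n k : ℕ) (s i : ZMod n) :
    ⇑(muS n k s) '' fibre n k i = fibre n k (s + 1 - (k : ZMod n) - i) := by
  ext v
  constructor
  · rintro ⟨u, hu, rfl⟩
    simp only [muS, Function.Involutive.coe_toPerm, fibre, Set.mem_setOf_eq] at hu ⊢
    exact congrArg (s + 1 - (k : ZMod n) - ·) hu
  · intro hv
    refine ⟨(i, fun t => v.2 t.rev), rfl, ?_⟩
    simp only [muS, Function.Involutive.coe_toPerm]
    have h2 : (fun t : Fin k => (fun t' : Fin k => v.2 t'.rev) t.rev) = v.2 := by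
      funext t; simp [Fin.rev_rev]
    exact Prod.ext hv.symm h2

lemma fibre_inj (n k : ℕ) {a b : ZMod n} (h : fibre n k a = fibre n k b) : a = b := by
  have : (a, fun _ : Fin k => (0 : ZMod 2)) ∈ fibre n k a := rfl
  rw [h] at this; exact this

lemma muS_fixed_iff (n k : ℕ) (s x : ZMod n) :
    (⇑(muS n k s) '' fibre n k x = fibre n k x) ↔ 2 * x = s + 1 - (k : ZMod n) := by
  rw [muS_image_fibre]
  constructor
  · intro h
    have := fibre_inj n k h
    linear_combination -this
  · intro h
    have hx : s + 1 - (k : ZMod n) - x = x := by linear_combination -h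
    rw [hx]

lemma castHom_val_two (n : ℕ) [NeZero n] (h : (2 : ℕ) ∣ n) (x : ZMod n) :
    ZMod.castHom h (ZMod 2) x = (x.val : ZMod 2) := by
  conv_lhs => rw [← ZMod.natCast_zmod_val x]
  rw [map_natCast]

lemma two_mul_eq_zero (n : ℕ) [NeZero n] (hn2 : (2 : ℕ) ∣ n) (y : ZMod n)
    (hy : 2 * y = 0) : y = 0 ∨ y = ((n / 2 : ℕ) : ZMod n) := by
  have hv : ((2 * y.val : ℕ) : ZMod n) = 0 := by
    push_cast [ZMod.natCast_zmod_val]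
    exact hy
  rw [ZMod.natCast_eq_zero_iff] at hv
  obtain ⟨m, hm⟩ := hv
  have hlt : y.val < n := ZMod.val_lt y
  have hn0 : 0 < n := Nat.pos_of_ne_zero (NeZero.ne n)
  have hm2 : m < 2 := by
    by_contra hm2
    push_neg at hm2
    have : n * 2 ≤ n * m := Nat.mul_le_mul_left n hm2
    omega
  interval_cases m
  · left
    have : y.val = 0 := by omega
    rw [← ZMod.natCast_zmod_val y, this, Nat.cast_zero]
  · right
    have : y.val = n / 2 := by omega
    rw [← ZMod.natCast_zmod_val y, this]

/-- (1) `μ_s` maps fibre `F_i` onto `F_{s+1-k-i}`; fibres `F_i` and `F_j` are interchanged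
by `μ_{i+j+k-1}`.  (2) If `n` is odd, `μ_s` preserves exactly one fibre; if `n` is even and
`s ≡ k (mod 2)`, it preserves no fibre; and if `n` is even and `s ≢ k (mod 2)`, it preserves
exactly two fibres, which differ by `n/2`. -/
theorem muS_fibre_action (n k : ℕ) (hn : 3 ≤ n) (hk1 : 1 ≤ k) (hkn : k < n)
    (s i j : ZMod n) :
    (⇑(muS n k s) '' fibre n k i = fibre n k (s + 1 - (k : ZMod n) - i)) ∧
    (⇑(muS n k (i + j + (k : ZMod n) - 1)) '' fibre n k i = fibre n k j ∧
      ⇑(muS n k (i + j + (k : ZMod n) - 1)) '' fibre n k j = fibre n k i) ∧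
    (Odd n → ∃! i₀ : ZMod n, ⇑(muS n k s) '' fibre n k i₀ = fibre n k i₀) ∧
    (Even n → s.val % 2 = k % 2 →
      ∀ i₀ : ZMod n, ⇑(muS n k s) '' fibre n k i₀ ≠ fibre n k i₀) ∧
    (Even n → s.val % 2 ≠ k % 2 →
      ∃ i₀ : ZMod n, i₀ ≠ i₀ + ((n / 2 : ℕ) : ZMod n) ∧
        {x : ZMod n | ⇑(muS n k s) '' fibre n k x = fibre n k x} =
          {i₀, i₀ + ((n / 2 : ℕ) : ZMod n)}) := by
  haveI : NeZero n := ⟨by omega⟩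
  refine ⟨muS_image_fibre n k s i, ⟨?_, ?_⟩, ?_, ?_, ?_⟩
  · rw [muS_image_fibre]; congr 1; ring
  · rw [muS_image_fibre]; congr 1; ring
  · -- odd case
    intro hodd
    have hcop : Nat.Coprime 2 n := by
      have h2 : ¬ (2 ∣ n) := by
        have := Nat.odd_iff.mp hodd
        omega
      exact (Nat.Prime.coprime_iff_not_dvd Nat.prime_two).2 h2
    have hu : IsUnit (2 : ZMod n) := by
      have := (ZMod.isUnit_iff_coprime 2 n).2 hcop
      simpa using this
    obtain ⟨u, hu2⟩ := hu
    have hkey : ∀ z : ZMod n, (2 : ZMod n) * (↑u⁻¹ * z) = z := by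
      intro z
      rw [← hu2, ← mul_assoc, Units.mul_inv, one_mul]
    refine ⟨↑u⁻¹ * (s + 1 - (k : ZMod n)), ?_, ?_⟩
    · simp only [muS_fixed_iff]
      exact hkey _
    · intro y hy
      simp only [muS_fixed_iff] at hy
      have h2 : (2 : ZMod n) * y = 2 * (↑u⁻¹ * (s + 1 - (k : ZMod n))) := by
        rw [hy, hkey]
      have hu' : IsUnit (2 : ZMod n) := ⟨u, hu2⟩
      exact hu'.mul_left_cancel h2
  · -- even, same parity: no fixed fibre
    intro he hp x hx
    rw [muS_fixed_iff] at hx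
    have hdvd : (2 : ℕ) ∣ n := he.two_dvd
    set φ := ZMod.castHom hdvd (ZMod 2) with hφ
    have := congrArg φ hx
    rw [map_mul, map_sub, map_add, map_one, map_natCast] at this
    have h2 : φ (2 : ZMod n) = 0 := by
      rw [show (2 : ZMod n) = ((2 : ℕ) : ZMod n) by norm_cast, map_natCast]
      decide
    rw [h2, zero_mul, castHom_val_two n hdvd s] at this
    have hsk : ((s.val : ℕ) : ZMod 2) = ((k : ℕ) : ZMod 2) := by
      rw [ZMod.natCast_eq_natCast_iff]
      exact hp
    rw [hsk] at this
    simp at this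
  · -- even, different parity: exactly two fixed fibres
    intro he hp
    have hdvd : (2 : ℕ) ∣ n := he.two_dvd
    set φ := ZMod.castHom hdvd (ZMod 2) with hφ
    set c := s + 1 - (k : ZMod n) with hc
    have hsk : ((s.val : ℕ) : ZMod 2) ≠ ((k : ℕ) : ZMod 2) :=
      fun h => hp ((ZMod.natCast_eq_natCast_iff _ _ _).mp h)
    have hφc : φ c = 0 := by
      rw [hc, map_sub, map_add, map_one, map_natCast, castHom_val_two n hdvd s]
      revert hsk
      generalize ((s.val : ℕ) : ZMod 2) = a
      generalize ((k : ℕ) : ZMod 2) = b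
      revert a b; decide
    have hcval : (2 : ℕ) ∣ c.val := by
      rw [← ZMod.natCast_eq_zero_iff]
      rw [← castHom_val_two n hdvd c]
      exact hφc
    have h2i₀ : (2 : ZMod n) * ((c.val / 2 : ℕ) : ZMod n) = c := by
      calc (2 : ZMod n) * ((c.val / 2 : ℕ) : ZMod n)
          = ((2 * (c.val / 2) : ℕ) : ZMod n) := by push_cast; ring
        _ = ((c.val : ℕ) : ZMod n) := by rw [Nat.mul_div_cancel' hcval]
        _ = c := ZMod.natCast_zmod_val c
    have h2half : (2 : ZMod n) * ((n / 2 : ℕ) : ZMod n) = 0 := by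
      calc (2 : ZMod n) * ((n / 2 : ℕ) : ZMod n)
          = ((2 * (n / 2) : ℕ) : ZMod n) := by push_cast; ring
        _ = ((n : ℕ) : ZMod n) := by rw [Nat.mul_div_cancel' hdvd]
        _ = 0 := ZMod.natCast_self n
    set i₀ : ZMod n := ((c.val / 2 : ℕ) : ZMod n) with hi₀
    refine ⟨i₀, ?_, ?_⟩
    · intro h
      rw [left_eq_add, ZMod.natCast_eq_zero_iff] at h
      have h2 : 0 < n / 2 := by omega
      have := Nat.le_of_dvd h2 h
      omega
    · ext x
      simp only [Set.mem_setOf_eq, muS_fixed_iff, ← hc, Set.mem_insert_iff,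
        Set.mem_singleton_iff]
      constructor
      · intro hx
        have hker : 2 * (x - i₀) = 0 := by
          rw [mul_sub, hx, h2i₀, sub_self]
        rcases two_mul_eq_zero n hdvd _ hker with h | h
        · left; linear_combination h
        · right; linear_combination h
      · rintro (rfl | rfl)
        · exact h2i₀
        · rw [mul_add, h2i₀, h2half, add_zero]
end

section
/- Let n ≥ 3, 1 ≤ k < n, let u : ZMod n → ZMod 2, and let τ = ∏_{s ∈ ZMod n} τ_s^{u_s} be the corresponding composite of the commuting involutions τ_s. If S is a subset of the fibre F_i of PX(n,k) with |S| odd and τ maps S onto itself, then τ fixes every vertex of F_i; equivalently, u_i = u_{i+1} = ⋯ = u_{i+k-1} = 0. -/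
/-- The automorphism `τ_s`: it flips bit `x_{s-i}` of a vertex `(i,x)` when the residue
`(s-i).val` lies in `{0,…,k-1}`, and fixes `(i,x)` otherwise. -/
def tauPerm (n k : ℕ) (s : ZMod n) : Equiv.Perm (ZMod n × (Fin k → ZMod 2)) :=
  Function.Involutive.toPerm
    (fun v => (v.1, fun t =>
      if (s - v.1).val < k ∧ (t : ℕ) = (s - v.1).val then v.2 t + 1 else v.2 t))
    (fun v => by
      have key : ∀ a : ZMod 2, a + 1 + 1 = a := by decide
      obtain ⟨i, x⟩ := v
      refine Prod.ext rfl ?_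
      funext t
      dsimp only
      by_cases h : (s - i).val < k ∧ (t : ℕ) = (s - i).val
      · simp only [if_pos h, key]
      · simp only [if_neg h])

/-- The commuting involutions `τ_a` and `τ_b` commute. -/
theorem tauPerm_commute (n k : ℕ) (a b : ZMod n) :
    Commute (tauPerm n k a) (tauPerm n k b) := by
  apply Equiv.ext
  intro v
  obtain ⟨i, x⟩ := v
  simp only [tauPerm, Equiv.Perm.mul_apply, Function.Involutive.coe_toPerm]
  refine Prod.ext rfl ?_
  funext t
  try dsimp only [Function.Involutive.toPerm, Equiv.coe_fn_mk]
  split_ifs <;> rfl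

/-- The composite `τ = ∏_{s ∈ ZMod n} τ_s ^ (u s)` of the commuting involutions `τ_s`. -/
noncomputable def tauProd (n k : ℕ) [NeZero n] (u : ZMod n → ZMod 2) :
    Equiv.Perm (ZMod n × (Fin k → ZMod 2)) :=
  Finset.univ.noncommProd (fun s => tauPerm n k s ^ (u s).val)
    (fun a _ b _ _ => (tauPerm_commute n k a b).pow_pow _ _)

lemma tauPow_apply (n k : ℕ) (s : ZMod n) (c : ZMod 2) (i : ZMod n) (x : Fin k → ZMod 2) :
    (tauPerm n k s ^ c.val) (i, x)
    = (i, fun t => x t + c * (if (s - i).val < k ∧ (t : ℕ) = (s - i).val then 1 else 0)) := by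
  rcases (show c = 0 ∨ c = 1 by revert c; decide) with rfl | rfl
  · simp
  · simp only [ZMod.val_one, pow_one, one_mul, tauPerm, Function.Involutive.coe_toPerm]
    refine Prod.ext rfl ?_
    funext t
    dsimp only
    change (if (s - i).val < k ∧ (t : ℕ) = (s - i).val then x t + 1 else x t) = _
    split_ifs <;> simp

lemma noncommProd_apply (n k : ℕ) [NeZero n] (u : ZMod n → ZMod 2)
    (F : Finset (ZMod n)) (i : ZMod n) (x : Fin k → ZMod 2) :
    (F.noncommProd (fun s => tauPerm n k s ^ (u s).val)
      (fun a _ b _ _ => (tauPerm_commute n k a b).pow_pow _ _)) (i, x)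
    = (i, fun t => x t + ∑ s ∈ F,
        u s * (if (s - i).val < k ∧ (t : ℕ) = (s - i).val then 1 else 0)) := by
  induction F using Finset.induction_on with
  | empty => simp only [Finset.sum_empty, add_zero]; rfl
  | insert a F hnm ih =>
    erw [Finset.noncommProd_insert_of_notMem _ _ _ _ hnm]
    simp only [Equiv.Perm.mul_apply, ih, tauPow_apply, Finset.sum_insert hnm]
    refine Prod.ext rfl ?_
    funext t
    dsimp only
    ring

lemma tauProd_apply (n k : ℕ) [NeZero n] (hkn : k < n) (u : ZMod n → ZMod 2)
    (i : ZMod n) (x : Fin k → ZMod 2) :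
    tauProd n k u (i, x) = (i, fun t => x t + u (i + ((t : ℕ) : ZMod n))) := by
  rw [tauProd, noncommProd_apply]
  refine Prod.ext rfl ?_
  funext t
  dsimp only
  congr 1
  rw [Finset.sum_eq_single (i + ((t : ℕ) : ZMod n))]
  · have hval : ((i + ((t : ℕ) : ZMod n)) - i).val = (t : ℕ) := by
      rw [add_sub_cancel_left, ZMod.val_natCast_of_lt (lt_trans t.2 hkn)]
    have h1 : ((i + ((t : ℕ) : ZMod n)) - i).val < k := by rw [hval]; exact t.2
    rw [if_pos ⟨h1, hval.symm⟩, mul_one]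
  · intro s _ hs
    rw [if_neg, mul_zero]
    rintro ⟨h1, h2⟩
    apply hs
    have : s - i = ((t : ℕ) : ZMod n) := by
      rw [h2, ZMod.natCast_val, ZMod.cast_id]
    rw [← this]; ring
  · intro h; exact absurd (Finset.mem_univ _) h

/-- If `τ = ∏_s τ_s ^ (u s)` maps a subset `S` of the fibre `F_i` of odd cardinality onto
itself, then `τ` fixes every vertex of `F_i`; equivalently `u_i = u_{i+1} = ⋯ = u_{i+k-1} = 0`. -/
theorem tauProd_fixes_fibre (n k : ℕ) [NeZero n] (hn : 3 ≤ n) (hk1 : 1 ≤ k) (hkn : k < n)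
    (u : ZMod n → ZMod 2) (i : ZMod n) (S : Set (ZMod n × (Fin k → ZMod 2)))
    (hSsub : S ⊆ fibre n k i) (hodd : Odd S.ncard)
    (hfix : ⇑(tauProd n k u) '' S = S) :
    (∀ v ∈ fibre n k i, tauProd n k u v = v) ∧
    (∀ t : ℕ, t < k → u (i + (t : ZMod n)) = 0) := by
  have hzero : ∀ t : ℕ, t < k → u (i + (t : ZMod n)) = 0 := by
    by_contra hc
    push_neg at hc
    obtain ⟨t0, ht0, hne⟩ := hc
    have hone : u (i + (t0 : ZMod n)) = 1 := by
      rcases (show ∀ a : ZMod 2, a = 0 ∨ a = 1 by decide) (u (i + (t0 : ZMod n))) with h | h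
      · exact absurd h hne
      · exact h
    set τ := tauProd n k u with hτ
    have hS : S.Finite := Set.toFinite S
    set T := hS.toFinset with hT
    have himg : T.image τ = T := by
      ext v
      simp only [Finset.mem_image, hT, Set.Finite.mem_toFinset]
      constructor
      · rintro ⟨w, hw, rfl⟩
        rw [← hfix]; exact ⟨w, hw, rfl⟩
      · intro hv
        rw [← hfix] at hv
        obtain ⟨w, hw, hwv⟩ := hv
        exact ⟨w, hw, hwv⟩
    set f : (ZMod n × (Fin k → ZMod 2)) → ZMod 2 := fun v => v.2 ⟨t0, ht0⟩ with hf
    have h1 : ∑ v ∈ T, f v = ∑ v ∈ T, f (τ v) := by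
      conv_lhs => rw [← himg]
      rw [Finset.sum_image (fun a _ b _ h => τ.injective h)]
    have h2 : ∀ v ∈ T, f (τ v) = f v + 1 := by
      intro v hv
      have hvS : v ∈ S := by rwa [hT, Set.Finite.mem_toFinset] at hv
      have hv1 : v.1 = i := hSsub hvS
      have : τ v = (i, fun t => v.2 t + u (i + ((t : ℕ) : ZMod n))) := by
        rw [hτ, show v = (v.1, v.2) from rfl, hv1, tauProd_apply n k hkn]
      rw [hf]
      simp only [this, hone]
    rw [Finset.sum_congr rfl h2, Finset.sum_add_distrib, Finset.sum_const, nsmul_eq_mul,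
      mul_one, left_eq_add] at h1
    have hdvd : (2 : ℕ) ∣ T.card := by
      rwa [ZMod.natCast_eq_zero_iff] at h1
    have : S.ncard = T.card := Set.ncard_eq_toFinset_card S hS
    rw [this, ← Nat.not_even_iff_odd] at hodd
    exact hodd (even_iff_two_dvd.mpr hdvd)
  refine ⟨?_, hzero⟩
  intro v hv
  have hv1 : v.1 = i := hv
  rw [show v = (v.1, v.2) from rfl, hv1, tauProd_apply n k hkn]
  refine Prod.ext rfl ?_
  funext t
  show v.2 t + u (i + ((t : ℕ) : ZMod n)) = v.2 t
  rw [hzero t t.2, add_zero]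
end

section
/- The Praeger–Xu graph PX(4,3) has determining number Det(PX(4,3)) = 2. -/
abbrev Vtx := ZMod 4 × (Fin 3 → ZMod 2)

lemma PX_adj_iff (u v : Vtx) :
    (PX 4 3).Adj u v ↔ u ≠ v ∧
      ((v.1 = u.1 + 1 ∧ v.2 ⟨0, by omega⟩ = u.2 ⟨1, by omega⟩ ∧ v.2 ⟨1, by omega⟩ = u.2 ⟨2, by omega⟩) ∨
       (u.1 = v.1 + 1 ∧ u.2 ⟨0, by omega⟩ = v.2 ⟨1, by omega⟩ ∧ u.2 ⟨1, by omega⟩ = v.2 ⟨2, by omega⟩)) := by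
  rw [PX, SimpleGraph.fromRel_adj]
  refine and_congr_right fun _ => or_congr ?_ ?_ <;>
    refine and_congr_right fun _ => ⟨fun h => ⟨h 0 (by omega), h 1 (by omega)⟩, ?_⟩ <;>
    · rintro ⟨h0, h1⟩ t ht
      have ht2 : t < 2 := by omega
      interval_cases t
      · exact h0
      · exact h1

instance PXAdjDec : DecidableRel (PX 4 3).Adj :=
  fun u v => decidable_of_iff _ (PX_adj_iff u v).symm

/-- Number of neighbours of `v` satisfying `P`. -/
def cnt (P : Vtx → Prop) [DecidablePred P] (v : Vtx) : ℕ :=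
  (Finset.univ.filter fun w => (PX 4 3).Adj v w ∧ P w).card

lemma cnt_pres (φ : PX 4 3 ≃g PX 4 3) (P : Vtx → Prop) [DecidablePred P]
    (hP : ∀ w, P (φ w) ↔ P w) (v : Vtx) : cnt P (φ v) = cnt P v := by
  unfold cnt
  refine Finset.card_bij' (fun w _ => φ.symm w) (fun w _ => φ w) ?_ ?_ ?_ ?_
  · intro a ha
    simp only [Finset.mem_filter, Finset.mem_univ, true_and] at ha ⊢
    constructor
    · have h' : (PX 4 3).Adj (φ v) (φ (φ.symm a)) := by
        rw [RelIso.apply_symm_apply]; exact ha.1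
      exact φ.map_rel_iff.mp h'
    · have hp := hP (φ.symm a)
      rw [RelIso.apply_symm_apply] at hp
      exact hp.mp ha.2
  · intro a ha
    simp only [Finset.mem_filter, Finset.mem_univ, true_and] at ha ⊢
    exact ⟨φ.map_rel_iff.mpr ha.1, (hP a).mpr ha.2⟩
  · intro a _; exact RelIso.apply_symm_apply φ a
  · intro a _; exact RelIso.symm_apply_apply φ a

lemma fix_step (φ : PX 4 3 ≃g PX 4 3) (F : List Vtx) (hF : ∀ f ∈ F, φ f = f) (u : Vtx)
    (h : ∀ w : Vtx, (∀ f ∈ F, ((PX 4 3).Adj w f ↔ (PX 4 3).Adj u f)) → w = u) :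
    φ u = u := by
  apply h
  intro f hf
  conv_lhs => rw [← hF f hf]
  exact φ.map_rel_iff

/-- Flip the bit at absolute position `p`. -/
def flipAt (p : ZMod 4) : Vtx → Vtx :=
  fun v => (v.1, fun t => v.2 t + if v.1 + ((t : ℕ) : ZMod 4) = p then 1 else 0)

lemma flipAt_inv (p : ZMod 4) : Function.Involutive (flipAt p) := by
  intro v
  unfold flipAt
  refine Prod.ext rfl ?_
  funext t
  simp only
  rw [add_assoc]
  have : ∀ m : ZMod 2, m + m = 0 := by decide
  split_ifs <;> simp [this]

lemma flipAt_adj (p : ZMod 4) (u v : Vtx) (h : (PX 4 3).Adj u v) :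
    (PX 4 3).Adj (flipAt p u) (flipAt p v) := by
  rw [PX_adj_iff] at h ⊢
  have e2 : (1 : ZMod 4) + 1 = 2 := by decide
  refine ⟨fun he => h.1 ((flipAt_inv p).injective he), ?_⟩
  rcases h.2 with ⟨h1, h2, h3⟩ | ⟨h1, h2, h3⟩
  · left
    refine ⟨h1, ?_, ?_⟩
    · simp only [flipAt]
      rw [h2]
      congr 1
      apply if_congr _ rfl rfl
      rw [h1]
      norm_num
    · simp only [flipAt]
      rw [h3]
      congr 1
      apply if_congr _ rfl rfl
      rw [h1]
      push_cast
      rw [add_assoc, e2]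
  · right
    refine ⟨h1, ?_, ?_⟩
    · simp only [flipAt]
      rw [h2]
      congr 1
      apply if_congr _ rfl rfl
      rw [h1]
      norm_num
    · simp only [flipAt]
      rw [h3]
      congr 1
      apply if_congr _ rfl rfl
      rw [h1]
      push_cast
      rw [add_assoc, e2]

def sigmaAut (p : ZMod 4) : PX 4 3 ≃g PX 4 3 where
  toEquiv := (flipAt_inv p).toPerm
  map_rel_iff' := by
    intro u v
    simp only [Function.Involutive.coe_toPerm]
    constructor
    · intro h
      have h2 := flipAt_adj p _ _ h
      rwa [flipAt_inv p u, flipAt_inv p v] at h2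
    · exact flipAt_adj p u v

lemma sigmaAut_fix (v : Vtx) : sigmaAut (v.1 + 3) v = v := by
  show flipAt (v.1 + 3) v = v
  unfold flipAt
  refine Prod.ext rfl ?_
  funext t
  simp only
  rw [if_neg, add_zero]
  intro h
  have ht := add_left_cancel h
  fin_cases t <;> exact absurd ht (by decide)

lemma sigmaAut_move (p : ZMod 4) : sigmaAut p (p, fun _ => 0) ≠ (p, fun _ => 0) := by
  intro h
  have h0 := congrArg (fun z : Vtx => z.2 ⟨0, by omega⟩) h
  have : sigmaAut p (p, fun _ => 0) = flipAt p (p, fun _ => 0) := rfl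
  rw [this] at h0
  simp only [flipAt] at h0
  norm_num at h0

lemma main_det :
    IsDeterminingSet (PX 4 3)
      {((0 : ZMod 4), ![0,0,0]), ((1 : ZMod 4), ![0,1,0])} := by
  intro φ hfix v
  have h1 : φ ((0 : ZMod 4), ![0,0,0]) = ((0 : ZMod 4), ![0,0,0]) :=
    hfix _ (Set.mem_insert _ _)
  have h2 : φ ((1 : ZMod 4), ![0,1,0]) = ((1 : ZMod 4), ![0,1,0]) :=
    hfix _ (Set.mem_insert_of_mem _ rfl)
  have hA1 : ∀ w, (PX 4 3).Adj (φ w) ((0 : ZMod 4), ![0,0,0]) ↔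
      (PX 4 3).Adj w ((0 : ZMod 4), ![0,0,0]) := by
    intro w
    conv_lhs => rw [← h1]
    exact φ.map_rel_iff
  have hA2 : ∀ w, (PX 4 3).Adj (φ w) ((1 : ZMod 4), ![0,1,0]) ↔
      (PX 4 3).Adj w ((1 : ZMod 4), ![0,1,0]) := by
    intro w
    conv_lhs => rw [← h2]
    exact φ.map_rel_iff
  have hP1 : ∀ w, (fun x : Vtx => (PX 4 3).Adj x ((1 : ZMod 4), ![0,1,0]) ∧
      ¬ (PX 4 3).Adj x ((0 : ZMod 4), ![0,0,0])) (φ w) ↔ (fun x : Vtx =>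
      (PX 4 3).Adj x ((1 : ZMod 4), ![0,1,0]) ∧
      ¬ (PX 4 3).Adj x ((0 : ZMod 4), ![0,0,0])) w := by
    intro w
    exact and_congr (hA2 w) (not_congr (hA1 w))
  have hP2 : ∀ w, (fun x : Vtx => (PX 4 3).Adj x ((0 : ZMod 4), ![0,0,0]) ∧
      ¬ (PX 4 3).Adj x ((1 : ZMod 4), ![0,1,0])) (φ w) ↔ (fun x : Vtx =>
      (PX 4 3).Adj x ((0 : ZMod 4), ![0,0,0]) ∧
      ¬ (PX 4 3).Adj x ((1 : ZMod 4), ![0,1,0])) w := by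
    intro w
    exact and_congr (hA1 w) (not_congr (hA2 w))
  -- pin the four extra vertices using neighbour counts
  have hu1 : φ ((0 : ZMod 4), ![0,0,1]) = ((0 : ZMod 4), ![0,0,1]) := by
    have key : ∀ w : Vtx, ((PX 4 3).Adj w ((1 : ZMod 4), ![0,1,0]) ∧
        ¬ (PX 4 3).Adj w ((0 : ZMod 4), ![0,0,0])) →
        cnt (fun x : Vtx => (PX 4 3).Adj x ((0 : ZMod 4), ![0,0,0]) ∧
          ¬ (PX 4 3).Adj x ((1 : ZMod 4), ![0,1,0])) w = 2 →
        w = ((0 : ZMod 4), ![0,0,1]) := by decide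
    apply key
    · exact (hP1 _).mpr (by decide)
    · rw [cnt_pres φ _ hP2]; decide
  have hu2 : φ ((2 : ZMod 4), ![1,0,0]) = ((2 : ZMod 4), ![1,0,0]) := by
    have key : ∀ w : Vtx, ((PX 4 3).Adj w ((1 : ZMod 4), ![0,1,0]) ∧
        ¬ (PX 4 3).Adj w ((0 : ZMod 4), ![0,0,0])) →
        cnt (fun x : Vtx => (PX 4 3).Adj x ((0 : ZMod 4), ![0,0,0]) ∧
          ¬ (PX 4 3).Adj x ((1 : ZMod 4), ![0,1,0])) w = 1 →
        w = ((2 : ZMod 4), ![1,0,0]) := by decide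
    apply key
    · exact (hP1 _).mpr (by decide)
    · rw [cnt_pres φ _ hP2]; decide
  have hu3 : φ ((3 : ZMod 4), ![0,0,0]) = ((3 : ZMod 4), ![0,0,0]) := by
    have key : ∀ w : Vtx, ((PX 4 3).Adj w ((0 : ZMod 4), ![0,0,0]) ∧
        ¬ (PX 4 3).Adj w ((1 : ZMod 4), ![0,1,0])) →
        cnt (fun x : Vtx => (PX 4 3).Adj x ((1 : ZMod 4), ![0,1,0]) ∧
          ¬ (PX 4 3).Adj x ((0 : ZMod 4), ![0,0,0])) w = 2 →
        w = ((3 : ZMod 4), ![0,0,0]) := by decide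
    apply key
    · exact (hP2 _).mpr (by decide)
    · rw [cnt_pres φ _ hP1]; decide
  have hu4 : φ ((3 : ZMod 4), ![1,0,0]) = ((3 : ZMod 4), ![1,0,0]) := by
    have key : ∀ w : Vtx, ((PX 4 3).Adj w ((0 : ZMod 4), ![0,0,0]) ∧
        ¬ (PX 4 3).Adj w ((1 : ZMod 4), ![0,1,0])) →
        cnt (fun x : Vtx => (PX 4 3).Adj x ((1 : ZMod 4), ![0,1,0]) ∧
          ¬ (PX 4 3).Adj x ((0 : ZMod 4), ![0,0,0])) w = 1 →
        w = ((3 : ZMod 4), ![1,0,0]) := by decide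
    apply key
    · exact (hP2 _).mpr (by decide)
    · rw [cnt_pres φ _ hP1]; decide
  have hv0 : φ ((1 : ZMod 4), ![0,1,1]) = ((1 : ZMod 4), ![0,1,1]) :=
    fix_step φ [((0 : ZMod 4), ![0,0,0]), ((0 : ZMod 4), ![0,0,1]), ((2 : ZMod 4), ![1,0,0])]
      (by intro f hf; simp only [List.mem_cons, List.not_mem_nil, or_false] at hf; rcases hf with h | h | h <;> (subst h; assumption)) _ (by decide)
  have hv1 : φ ((2 : ZMod 4), ![0,0,0]) = ((2 : ZMod 4), ![0,0,0]) :=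
    fix_step φ [((1 : ZMod 4), ![0,1,0]), ((3 : ZMod 4), ![0,0,0]), ((3 : ZMod 4), ![1,0,0])]
      (by intro f hf; simp only [List.mem_cons, List.not_mem_nil, or_false] at hf; rcases hf with h | h | h <;> (subst h; assumption)) _ (by decide)
  have hv2 : φ ((2 : ZMod 4), ![0,1,0]) = ((2 : ZMod 4), ![0,1,0]) :=
    fix_step φ [((3 : ZMod 4), ![0,0,0]), ((3 : ZMod 4), ![1,0,0]), ((1 : ZMod 4), ![0,1,1])]
      (by intro f hf; simp only [List.mem_cons, List.not_mem_nil, or_false] at hf; rcases hf with h | h | h <;> (subst h; assumption)) _ (by decide)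
  have hv3 : φ ((2 : ZMod 4), ![1,0,1]) = ((2 : ZMod 4), ![1,0,1]) :=
    fix_step φ [((1 : ZMod 4), ![0,1,0]), ((3 : ZMod 4), ![0,0,0]), ((1 : ZMod 4), ![0,1,1])]
      (by intro f hf; simp only [List.mem_cons, List.not_mem_nil, or_false] at hf; rcases hf with h | h | h <;> (subst h; assumption)) _ (by decide)
  have hv4 : φ ((2 : ZMod 4), ![1,1,0]) = ((2 : ZMod 4), ![1,1,0]) :=
    fix_step φ [((1 : ZMod 4), ![0,1,0]), ((3 : ZMod 4), ![1,0,0]), ((1 : ZMod 4), ![0,1,1])]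
      (by intro f hf; simp only [List.mem_cons, List.not_mem_nil, or_false] at hf; rcases hf with h | h | h <;> (subst h; assumption)) _ (by decide)
  have hv5 : φ ((2 : ZMod 4), ![1,1,1]) = ((2 : ZMod 4), ![1,1,1]) :=
    fix_step φ [((1 : ZMod 4), ![0,1,0]), ((3 : ZMod 4), ![1,0,0]), ((1 : ZMod 4), ![0,1,1])]
      (by intro f hf; simp only [List.mem_cons, List.not_mem_nil, or_false] at hf; rcases hf with h | h | h <;> (subst h; assumption)) _ (by decide)
  have hv6 : φ ((3 : ZMod 4), ![0,0,1]) = ((3 : ZMod 4), ![0,0,1]) :=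
    fix_step φ [((0 : ZMod 4), ![0,0,0]), ((2 : ZMod 4), ![1,0,0]), ((2 : ZMod 4), ![0,0,0])]
      (by intro f hf; simp only [List.mem_cons, List.not_mem_nil, or_false] at hf; rcases hf with h | h | h <;> (subst h; assumption)) _ (by decide)
  have hv7 : φ ((3 : ZMod 4), ![1,0,1]) = ((3 : ZMod 4), ![1,0,1]) :=
    fix_step φ [((0 : ZMod 4), ![0,0,0]), ((2 : ZMod 4), ![0,1,0]), ((2 : ZMod 4), ![1,1,0])]
      (by intro f hf; simp only [List.mem_cons, List.not_mem_nil, or_false] at hf; rcases hf with h | h | h <;> (subst h; assumption)) _ (by decide)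
  have hv8 : φ ((0 : ZMod 4), ![1,0,1]) = ((0 : ZMod 4), ![1,0,1]) :=
    fix_step φ [((1 : ZMod 4), ![0,1,0]), ((3 : ZMod 4), ![0,0,0]), ((1 : ZMod 4), ![0,1,1])]
      (by intro f hf; simp only [List.mem_cons, List.not_mem_nil, or_false] at hf; rcases hf with h | h | h <;> (subst h; assumption)) _ (by decide)
  have hv9 : φ ((1 : ZMod 4), ![0,0,0]) = ((1 : ZMod 4), ![0,0,0]) :=
    fix_step φ [((0 : ZMod 4), ![0,0,0]), ((0 : ZMod 4), ![0,0,1]), ((2 : ZMod 4), ![0,0,0])]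
      (by intro f hf; simp only [List.mem_cons, List.not_mem_nil, or_false] at hf; rcases hf with h | h | h <;> (subst h; assumption)) _ (by decide)
  have hv10 : φ ((1 : ZMod 4), ![0,0,1]) = ((1 : ZMod 4), ![0,0,1]) :=
    fix_step φ [((0 : ZMod 4), ![0,0,0]), ((0 : ZMod 4), ![0,0,1]), ((2 : ZMod 4), ![0,0,0])]
      (by intro f hf; simp only [List.mem_cons, List.not_mem_nil, or_false] at hf; rcases hf with h | h | h <;> (subst h; assumption)) _ (by decide)
  have hv11 : φ ((1 : ZMod 4), ![1,0,0]) = ((1 : ZMod 4), ![1,0,0]) :=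
    fix_step φ [((0 : ZMod 4), ![0,0,0]), ((2 : ZMod 4), ![1,0,0]), ((2 : ZMod 4), ![0,0,0])]
      (by intro f hf; simp only [List.mem_cons, List.not_mem_nil, or_false] at hf; rcases hf with h | h | h <;> (subst h; assumption)) _ (by decide)
  have hv12 : φ ((1 : ZMod 4), ![1,0,1]) = ((1 : ZMod 4), ![1,0,1]) :=
    fix_step φ [((0 : ZMod 4), ![0,0,0]), ((2 : ZMod 4), ![0,1,0]), ((2 : ZMod 4), ![1,1,0])]
      (by intro f hf; simp only [List.mem_cons, List.not_mem_nil, or_false] at hf; rcases hf with h | h | h <;> (subst h; assumption)) _ (by decide)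
  have hv13 : φ ((1 : ZMod 4), ![1,1,0]) = ((1 : ZMod 4), ![1,1,0]) :=
    fix_step φ [((0 : ZMod 4), ![0,0,1]), ((2 : ZMod 4), ![1,0,0]), ((2 : ZMod 4), ![0,0,0])]
      (by intro f hf; simp only [List.mem_cons, List.not_mem_nil, or_false] at hf; rcases hf with h | h | h <;> (subst h; assumption)) _ (by decide)
  have hv14 : φ ((1 : ZMod 4), ![1,1,1]) = ((1 : ZMod 4), ![1,1,1]) :=
    fix_step φ [((0 : ZMod 4), ![0,0,1]), ((2 : ZMod 4), ![0,1,0]), ((2 : ZMod 4), ![1,1,0])]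
      (by intro f hf; simp only [List.mem_cons, List.not_mem_nil, or_false] at hf; rcases hf with h | h | h <;> (subst h; assumption)) _ (by decide)
  have hv15 : φ ((2 : ZMod 4), ![0,0,1]) = ((2 : ZMod 4), ![0,0,1]) :=
    fix_step φ [((3 : ZMod 4), ![0,0,0]), ((1 : ZMod 4), ![0,0,0]), ((1 : ZMod 4), ![0,0,1])]
      (by intro f hf; simp only [List.mem_cons, List.not_mem_nil, or_false] at hf; rcases hf with h | h | h <;> (subst h; assumption)) _ (by decide)
  have hv16 : φ ((2 : ZMod 4), ![0,1,1]) = ((2 : ZMod 4), ![0,1,1]) :=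
    fix_step φ [((3 : ZMod 4), ![1,0,0]), ((1 : ZMod 4), ![0,0,0]), ((1 : ZMod 4), ![0,0,1])]
      (by intro f hf; simp only [List.mem_cons, List.not_mem_nil, or_false] at hf; rcases hf with h | h | h <;> (subst h; assumption)) _ (by decide)
  have hv17 : φ ((3 : ZMod 4), ![0,1,0]) = ((3 : ZMod 4), ![0,1,0]) :=
    fix_step φ [((0 : ZMod 4), ![1,0,1]), ((2 : ZMod 4), ![0,0,1])]
      (by intro f hf; simp only [List.mem_cons, List.not_mem_nil, or_false] at hf; rcases hf with h | h <;> (subst h; assumption)) _ (by decide)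
  have hv18 : φ ((3 : ZMod 4), ![0,1,1]) = ((3 : ZMod 4), ![0,1,1]) :=
    fix_step φ [((2 : ZMod 4), ![1,0,0]), ((2 : ZMod 4), ![1,0,1]), ((0 : ZMod 4), ![1,0,1])]
      (by intro f hf; simp only [List.mem_cons, List.not_mem_nil, or_false] at hf; rcases hf with h | h | h <;> (subst h; assumption)) _ (by decide)
  have hv19 : φ ((3 : ZMod 4), ![1,1,0]) = ((3 : ZMod 4), ![1,1,0]) :=
    fix_step φ [((0 : ZMod 4), ![1,0,1]), ((2 : ZMod 4), ![0,1,1])]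
      (by intro f hf; simp only [List.mem_cons, List.not_mem_nil, or_false] at hf; rcases hf with h | h <;> (subst h; assumption)) _ (by decide)
  have hv20 : φ ((3 : ZMod 4), ![1,1,1]) = ((3 : ZMod 4), ![1,1,1]) :=
    fix_step φ [((2 : ZMod 4), ![0,1,0]), ((0 : ZMod 4), ![1,0,1]), ((2 : ZMod 4), ![0,1,1])]
      (by intro f hf; simp only [List.mem_cons, List.not_mem_nil, or_false] at hf; rcases hf with h | h | h <;> (subst h; assumption)) _ (by decide)
  have hv21 : φ ((0 : ZMod 4), ![0,1,0]) = ((0 : ZMod 4), ![0,1,0]) :=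
    fix_step φ [((3 : ZMod 4), ![0,0,1]), ((1 : ZMod 4), ![1,0,1])]
      (by intro f hf; simp only [List.mem_cons, List.not_mem_nil, or_false] at hf; rcases hf with h | h <;> (subst h; assumption)) _ (by decide)
  have hv22 : φ ((0 : ZMod 4), ![0,1,1]) = ((0 : ZMod 4), ![0,1,1]) :=
    fix_step φ [((3 : ZMod 4), ![0,0,1]), ((1 : ZMod 4), ![1,1,1])]
      (by intro f hf; simp only [List.mem_cons, List.not_mem_nil, or_false] at hf; rcases hf with h | h <;> (subst h; assumption)) _ (by decide)
  have hv23 : φ ((0 : ZMod 4), ![1,0,0]) = ((0 : ZMod 4), ![1,0,0]) :=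
    fix_step φ [((1 : ZMod 4), ![0,0,0]), ((3 : ZMod 4), ![1,1,0])]
      (by intro f hf; simp only [List.mem_cons, List.not_mem_nil, or_false] at hf; rcases hf with h | h <;> (subst h; assumption)) _ (by decide)
  have hv24 : φ ((0 : ZMod 4), ![1,1,0]) = ((0 : ZMod 4), ![1,1,0]) :=
    fix_step φ [((1 : ZMod 4), ![1,0,0]), ((3 : ZMod 4), ![1,1,1])]
      (by intro f hf; simp only [List.mem_cons, List.not_mem_nil, or_false] at hf; rcases hf with h | h <;> (subst h; assumption)) _ (by decide)
  have hv25 : φ ((0 : ZMod 4), ![1,1,1]) = ((0 : ZMod 4), ![1,1,1]) :=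
    fix_step φ [((1 : ZMod 4), ![1,1,0]), ((3 : ZMod 4), ![1,1,1])]
      (by intro f hf; simp only [List.mem_cons, List.not_mem_nil, or_false] at hf; rcases hf with h | h <;> (subst h; assumption)) _ (by decide)

  obtain ⟨i, x⟩ := v
  have hx : x = ![x 0, x 1, x 2] := by funext t; fin_cases t <;> rfl
  rw [hx]
  have hz : ∀ a : ZMod 2, a = 0 ∨ a = 1 := by decide
  have hz4 : ∀ a : ZMod 4, a = 0 ∨ a = 1 ∨ a = 2 ∨ a = 3 := by decide
  generalize x 0 = a
  generalize x 1 = b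
  generalize x 2 = c
  rcases hz4 i with rfl | rfl | rfl | rfl <;> rcases hz a with rfl | rfl <;>
    rcases hz b with rfl | rfl <;> rcases hz c with rfl | rfl <;> assumption

/-- `Det(PX(4,3)) = 2`. -/
theorem detNum_PX_four_three : detNum (PX 4 3) = 2 := by
  have h2mem : 2 ∈ {m | ∃ S : Set Vtx, S.ncard = m ∧ IsDeterminingSet (PX 4 3) S} :=
    ⟨{((0 : ZMod 4), ![0,0,0]), ((1 : ZMod 4), ![0,1,0])},
      Set.ncard_pair (by decide), main_det⟩
  unfold detNum
  apply le_antisymm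
  · exact Nat.sInf_le h2mem
  · apply le_csInf ⟨2, h2mem⟩
    rintro m ⟨S, hS, hdet⟩
    by_contra hlt
    push_neg at hlt
    interval_cases m
    · have hempty : S = ∅ := (Set.ncard_eq_zero (Set.toFinite S)).mp hS
      have := hdet (sigmaAut 0)
        (by intro w hw; rw [hempty] at hw; exact absurd hw (Set.notMem_empty w))
        ((0 : ZMod 4), fun _ => 0)
      exact sigmaAut_move 0 this
    · obtain ⟨v, hv⟩ := Set.ncard_eq_one.mp hS
      have := hdet (sigmaAut (v.1 + 3))
        (by intro w hw
            rw [hv, Set.mem_singleton_iff] at hw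
            subst hw
            exact sigmaAut_fix w)
        ((v.1 + 3), fun _ => 0)
      exact sigmaAut_move (v.1 + 3) this
end

section
/- Let n ≥ 3, 1 ≤ k < n, let u = (i,x) and v = (j,y) be vertices of PX(n,k), and let M = {i, i+1, …, i+k-1} ∩ {j, j+1, …, j+k-1} ⊆ ZMod n (for m ∈ M the differences m - i and m - j, computed in ZMod n, lie in {0,…,k-1} and are used as indices into the length-k bitstrings). Then u and v are interchangeable by some α ∈ 𝒜 if and only if one of the following holds: (1) j = i; (2) j ≠ i and for all m ∈ M, x_{k-1-(m-j)} = y_{m-j} if and only if y_{k-1-(m-i)} = x_{m-i}; (3) n is even, j = i + n/2, and for all m ∈ M, x_{m-j} = y_{m-j} if and only if y_{m-i} = x_{m-i}. -/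
/-- The rotation `ρ(i,x) = (i+1,x)`. -/
def rhoPerm (n k : ℕ) : Equiv.Perm (ZMod n × (Fin k → ZMod 2)) :=
  (Equiv.addRight (1 : ZMod n)).prodCongr (Equiv.refl _)

/-- The reflection `μ(i,x) = (-i, x⁻)`, where `(x⁻) t = x (k-1-t)`. -/
def muPerm (n k : ℕ) : Equiv.Perm (ZMod n × (Fin k → ZMod 2)) :=
  Function.Involutive.toPerm (fun v => (-v.1, fun t => v.2 t.rev))
    (fun v => by simp [Fin.rev_rev])

/-- The group `𝒜` generated by `ρ`, `μ` and the `τ_s` (a subgroup of the symmetric group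
on the vertices of `PX(n,k)`, all of whose elements are automorphisms of `PX(n,k)`). -/
def scriptA (n k : ℕ) : Subgroup (Equiv.Perm (ZMod n × (Fin k → ZMod 2))) :=
  Subgroup.closure ({rhoPerm n k, muPerm n k} ∪ Set.range (tauPerm n k))

namespace PXA

lemma add2 : ∀ a b : ZMod 2, a + b + b = a := by decide
lemma aab : ∀ a b : ZMod 2, a + (a + b) = b := by decide
lemma bab : ∀ a b : ZMod 2, b + (a + b) = a := by decide
lemma neZero1 : ∀ z : ZMod 2, z ≠ 0 → z = 1 := by decide
lemma sum_eq : ∀ a b c d : ZMod 2, ((a = b) ↔ (c = d)) → a + b = c + d := by decide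
lemma iff_of : ∀ a b c d e : ZMod 2, a = b + e → d = c + e → (b = a ↔ c = d) := by decide

lemma cast_rev {k : ℕ} (n : ℕ) (t : Fin k) :
    (((t.rev : ℕ) : ZMod n)) = ((k-1:ℕ) : ZMod n) - ((t : ℕ) : ZMod n) := by
  have h1 : (t.rev : ℕ) = k - 1 - (t:ℕ) := by
    have := t.is_lt; rw [Fin.val_rev]; omega
  have h2 : (t:ℕ) ≤ k - 1 := by have := t.is_lt; omega
  rw [h1, Nat.cast_sub h2]

lemma rev_mk {k : ℕ} (t : Fin k) (h : k - 1 - (t:ℕ) < k) :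
    t.rev = ⟨k - 1 - (t:ℕ), h⟩ := by
  apply Fin.ext
  rw [Fin.val_rev]
  show k - ((t:ℕ) + 1) = k - 1 - (t:ℕ)
  omega

variable (n k : ℕ)

/-- The normal form maps. -/
def phiFun (ε : Bool) (a : ZMod n) (f : ZMod n → ZMod 2) :
    ZMod n × (Fin k → ZMod 2) → ZMod n × (Fin k → ZMod 2) :=
  fun p => ((cond ε (-p.1) p.1) + a,
    fun t => p.2 (cond ε t.rev t) + f ((cond ε (-p.1) p.1) + a + ((t : ℕ) : ZMod n)))

def phiPerm (ε : Bool) (a : ZMod n) (f : ZMod n → ZMod 2) :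
    Equiv.Perm (ZMod n × (Fin k → ZMod 2)) where
  toFun := phiFun n k ε a f
  invFun := phiFun n k ε (cond ε a (-a))
    (fun m => cond ε (f (a + ((k-1:ℕ) : ZMod n) - m)) (f (m + a)))
  left_inv := by
    rintro ⟨i, x⟩
    cases ε <;> refine Prod.ext (by simp [phiFun]) ?_ <;> funext t <;>
      simp only [phiFun, cond, Fin.rev_rev]
    · rw [show i + a + -a + ((t:ℕ):ZMod n) + a = i + a + ((t:ℕ):ZMod n) by ring, add2]
    · rw [cast_rev, show a + ((k-1:ℕ):ZMod n) - (-(-i + a) + a + ((t:ℕ):ZMod n)) =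
        -i + a + (((k-1:ℕ):ZMod n) - ((t:ℕ):ZMod n)) by ring, add2]
  right_inv := by
    rintro ⟨i, x⟩
    cases ε <;> refine Prod.ext (by simp [phiFun]) ?_ <;> funext t <;>
      simp only [phiFun, cond, Fin.rev_rev]
    · rw [show i + -a + ((t:ℕ):ZMod n) + a = i + -a + a + ((t:ℕ):ZMod n) by ring, add2]
    · rw [cast_rev,
        show a + ((k-1:ℕ):ZMod n) - (-i + a + (((k-1:ℕ):ZMod n) - ((t:ℕ):ZMod n))) =
          i + ((t:ℕ):ZMod n) by ring,
        show -(-i + a) + a + ((t:ℕ):ZMod n) = i + ((t:ℕ):ZMod n) by ring, add2]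

lemma phiPerm_apply (ε : Bool) (a : ZMod n) (f : ZMod n → ZMod 2) (p) :
    phiPerm n k ε a f p = phiFun n k ε a f p := rfl

lemma comp_phiFun (ε₁ ε₂ : Bool) (a₁ a₂ : ZMod n) (f₁ f₂ : ZMod n → ZMod 2) (p) :
    phiFun n k ε₁ a₁ f₁ (phiFun n k ε₂ a₂ f₂ p) =
    phiFun n k (xor ε₁ ε₂) (cond ε₁ (a₁ - a₂) (a₁ + a₂))
      (fun m => (cond ε₁ (f₂ (a₁ + ((k-1:ℕ):ZMod n) - m)) (f₂ (m - a₁))) + f₁ m) p := by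
  obtain ⟨i, x⟩ := p
  cases ε₁ <;> cases ε₂ <;>
    (refine Prod.ext (by simp only [phiFun, Bool.false_xor, Bool.true_xor, Bool.not_false,
      Bool.not_true, cond]; ring) ?_) <;> funext t <;>
      simp only [phiFun, Bool.false_xor, Bool.true_xor, Bool.not_false, Bool.not_true, cond,
        Fin.rev_rev] <;>
      (try rw [cast_rev]) <;> ring_nf

/-- The normal-form property. -/
def Nice (α : Equiv.Perm (ZMod n × (Fin k → ZMod 2))) : Prop :=
  ∃ ε a f, ∀ p, α p = phiFun n k ε a f p

lemma nice_one : Nice n k 1 :=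
  ⟨false, 0, 0, by rintro ⟨i, x⟩; simp [phiFun]⟩

lemma nice_mul {α β} (hα : Nice n k α) (hβ : Nice n k β) : Nice n k (α * β) := by
  obtain ⟨ε₁, a₁, f₁, h₁⟩ := hα; obtain ⟨ε₂, a₂, f₂, h₂⟩ := hβ
  exact ⟨_, _, _, fun p => by
    rw [Equiv.Perm.mul_apply, h₂, h₁, comp_phiFun]⟩

lemma nice_inv {α} (hα : Nice n k α) : Nice n k α⁻¹ := by
  obtain ⟨ε, a, f, h⟩ := hα
  have hα : α = phiPerm n k ε a f := Equiv.ext h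
  subst hα
  exact ⟨ε, cond ε a (-a),
    (fun m => cond ε (f (a + ((k-1:ℕ) : ZMod n) - m)) (f (m + a))), fun p => rfl⟩

lemma nice_rho : Nice n k (rhoPerm n k) :=
  ⟨false, 1, 0, by rintro ⟨i, x⟩; simp [rhoPerm, phiFun]⟩

lemma nice_mu : Nice n k (muPerm n k) :=
  ⟨true, 0, 0, by rintro ⟨i, x⟩; simp [muPerm, phiFun, Function.Involutive.toPerm]⟩

lemma tau_eq_phi (hkn : k < n) (s : ZMod n) :
    tauPerm n k s = phiPerm n k false 0 (fun m => if m = s then 1 else 0) := by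
  haveI : NeZero n := ⟨by omega⟩
  apply Equiv.ext
  rintro ⟨i, x⟩
  refine Prod.ext (by simp [tauPerm, phiPerm, phiFun, Function.Involutive.toPerm]) ?_
  funext t
  show (if (s - i).val < k ∧ (t : ℕ) = (s - i).val then x t + 1 else x t) =
    x t + (if (i + 0 + ((t:ℕ) : ZMod n)) = s then 1 else 0)
  have key : (i + 0 + ((t:ℕ):ZMod n) = s) ↔ ((s - i).val < k ∧ (t:ℕ) = (s - i).val) := by
    constructor
    · intro h
      have h2 : s - i = ((t:ℕ):ZMod n) := by rw [← h]; ring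
      have hv : (s - i).val = (t:ℕ) := by
        rw [h2, ZMod.val_natCast_of_lt (lt_trans t.is_lt hkn)]
      exact ⟨hv ▸ t.is_lt, hv.symm⟩
    · rintro ⟨h1, h2⟩
      have h3 : ((t:ℕ):ZMod n) = s - i := by
        rw [h2, ZMod.natCast_val, ZMod.cast_id]
      rw [add_zero, h3]; ring
  by_cases hc : (s - i).val < k ∧ (t : ℕ) = (s - i).val
  · rw [if_pos hc, if_pos (key.mpr hc)]
  · rw [if_neg hc, if_neg (fun h => hc (key.mp h)), add_zero]

lemma nice_tau (hkn : k < n) (s : ZMod n) : Nice n k (tauPerm n k s) :=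
  ⟨false, 0, fun m => if m = s then 1 else 0, fun p => by rw [tau_eq_phi n k hkn s]; rfl⟩

lemma nice_of_mem (hkn : k < n) {α} (h : α ∈ scriptA n k) : Nice n k α := by
  induction h using Subgroup.closure_induction with
  | mem g hg =>
    simp only [Set.mem_union, Set.mem_insert_iff, Set.mem_singleton_iff, Set.mem_range] at hg
    rcases hg with (rfl | rfl) | ⟨s, rfl⟩
    · exact nice_rho n k
    · exact nice_mu n k
    · exact nice_tau n k hkn s
  | one => exact nice_one n k
  | mul g₁ g₂ _ _ h1 h2 => exact nice_mul n k h1 h2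
  | inv g _ h1 => exact nice_inv n k h1

lemma rho_pow_apply (m : ℕ) : ∀ p : ZMod n × (Fin k → ZMod 2),
    ((rhoPerm n k) ^ m) p = (p.1 + (m : ZMod n), p.2) := by
  induction m with
  | zero => intro p; simp
  | succ m ih =>
    intro p
    rw [pow_succ, Equiv.Perm.mul_apply, ih]
    refine Prod.ext ?_ rfl
    show p.1 + 1 + (m : ZMod n) = p.1 + ((m+1 : ℕ) : ZMod n)
    push_cast; ring

lemma phi_rot_mem (hkn : k < n) (ε : Bool) (a : ZMod n) :
    phiPerm n k ε a 0 ∈ scriptA n k := by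
  haveI : NeZero n := ⟨by omega⟩
  have hrho : rhoPerm n k ∈ scriptA n k :=
    Subgroup.subset_closure (Or.inl (Set.mem_insert _ _))
  have hmu : muPerm n k ∈ scriptA n k :=
    Subgroup.subset_closure (Or.inl (Set.mem_insert_of_mem _ rfl))
  cases ε
  · have key : phiPerm n k false a 0 = (rhoPerm n k) ^ a.val := by
      apply Equiv.ext; rintro ⟨i, x⟩
      rw [rho_pow_apply]
      refine Prod.ext ?_ (by funext t; simp [phiPerm, phiFun])
      show i + a = i + ((a.val : ℕ) : ZMod n)
      rw [ZMod.natCast_val, ZMod.cast_id]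
    rw [key]; exact pow_mem hrho _
  · have key : phiPerm n k true a 0 = (rhoPerm n k) ^ a.val * muPerm n k := by
      apply Equiv.ext; rintro ⟨i, x⟩
      rw [Equiv.Perm.mul_apply]
      rw [show (muPerm n k (i,x)) = (-i, fun t => x t.rev) from rfl, rho_pow_apply]
      refine Prod.ext ?_ (by funext t; simp [phiPerm, phiFun])
      show -i + a = -i + ((a.val : ℕ) : ZMod n)
      rw [ZMod.natCast_val, ZMod.cast_id]
    rw [key]; exact mul_mem (pow_mem hrho _) hmu

lemma phi_tau_mem (hkn : k < n) (f : ZMod n → ZMod 2) :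
    phiPerm n k false 0 f ∈ scriptA n k := by
  classical
  haveI : NeZero n := ⟨by omega⟩
  suffices H : ∀ (S : Finset (ZMod n)) (f : ZMod n → ZMod 2),
      (∀ m, f m ≠ 0 → m ∈ S) → phiPerm n k false 0 f ∈ scriptA n k from
    H Finset.univ f (fun m _ => Finset.mem_univ m)
  intro S
  induction S using Finset.induction_on with
  | empty =>
    intro f hf
    have hf0 : f = fun _ => 0 := by
      funext m
      by_contra h
      exact absurd (hf m h) (Finset.notMem_empty m)
    have key : phiPerm n k false 0 f = 1 := by
      apply Equiv.ext; rintro ⟨i, x⟩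
      refine Prod.ext (by simp [phiPerm, phiFun]) ?_
      funext t
      show x t + f _ = x t
      rw [hf0]; exact add_zero _
    rw [key]; exact one_mem _
  | @insert s S hs ih =>
    intro f hf
    by_cases hfs : f s = 0
    · refine ih f (fun m hm => ?_)
      rcases Finset.mem_insert.mp (hf m hm) with rfl | h
      · exact absurd hfs hm
      · exact h
    · set f' : ZMod n → ZMod 2 := Function.update f s 0 with hf'
      have hparam : ∀ m : ZMod n, f m = (if m - 0 = s then (1:ZMod 2) else 0) + f' m := by
        intro m
        by_cases hm : m = s
        · subst hm
          simp [hf', Function.update_self, neZero1 _ hfs, sub_zero]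
        · simp [hf', Function.update_of_ne hm, sub_zero, hm]
      have h1 : phiPerm n k false 0 f =
          tauPerm n k s * phiPerm n k false 0 f' := by
        rw [tau_eq_phi n k hkn s]
        apply Equiv.ext; rintro ⟨i, x⟩
        rw [Equiv.Perm.mul_apply, phiPerm_apply, phiPerm_apply, phiPerm_apply, comp_phiFun]
        refine Prod.ext (by simp [phiFun]) ?_
        funext t
        show x t + f _ = x t + _
        rw [hparam]
        simp only [Bool.false_xor, cond, add_zero, zero_add, sub_zero]
        ring
      rw [h1]
      refine mul_mem (Subgroup.subset_closure (Or.inr ⟨s, rfl⟩)) (ih f' (fun m hm => ?_))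
      by_cases hms : m = s
      · subst hms
        simp [hf', Function.update_self] at hm
      · have : f m ≠ 0 := by
          rwa [hf', Function.update_of_ne hms] at hm
        rcases Finset.mem_insert.mp (hf m this) with rfl | h
        · exact absurd rfl hms
        · exact h

lemma phi_mem (hkn : k < n) (ε : Bool) (a : ZMod n) (f : ZMod n → ZMod 2) :
    phiPerm n k ε a f ∈ scriptA n k := by
  have key : phiPerm n k ε a f = phiPerm n k false 0 f * phiPerm n k ε a 0 := by
    apply Equiv.ext; intro p
    rw [Equiv.Perm.mul_apply, phiPerm_apply, phiPerm_apply, phiPerm_apply, comp_phiFun]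
    simp only [Bool.false_xor, cond, zero_add, sub_zero, Pi.zero_apply]
  rw [key]; exact mul_mem (phi_tau_mem n k hkn f) (phi_rot_mem n k hkn ε a)

lemma half_lemma (hn : 0 < n) (z : ZMod n) (hz : z + z = 0) :
    z = 0 ∨ (Even n ∧ z = ((n/2 : ℕ) : ZMod n)) := by
  haveI : NeZero n := ⟨by omega⟩
  have hzv : ((z.val : ℕ) : ZMod n) = z := by rw [ZMod.natCast_val, ZMod.cast_id]
  have h1 : ((z.val + z.val : ℕ) : ZMod n) = 0 := by push_cast [hzv]; exact hz
  have h2 : (n:ℕ) ∣ z.val + z.val := (ZMod.natCast_eq_zero_iff _ n).mp h1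
  have h3 : z.val < n := ZMod.val_lt z
  obtain ⟨c, hc⟩ := h2
  have hc2 : c = 0 ∨ c = 1 := by
    rcases Nat.lt_or_ge c 2 with h | h
    · omega
    · exfalso; nlinarith
  rcases hc2 with rfl | rfl
  · left
    have : z.val = 0 := by omega
    rw [← hzv, this, Nat.cast_zero]
  · right
    refine ⟨⟨z.val, by omega⟩, ?_⟩
    have : n / 2 = z.val := by omega
    rw [this, hzv]

end PXA

/-- Vertices `u = (i,x)` and `v = (j,y)` of `PX(n,k)` are interchangeable by some `α ∈ 𝒜`
iff (1) `j = i`; or (2) `j ≠ i` and for all `m ∈ M`, `x⁻_{m-j} = y_{m-j} ↔ y⁻_{m-i} = x_{m-i}`;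
or (3) `j = i + n/2` (`n` even) and for all `m ∈ M`, `x_{m-j} = y_{m-j} ↔ y_{m-i} = x_{m-i}`,
where `M = {i,…,i+k-1} ∩ {j,…,j+k-1} ⊆ ZMod n`. -/
theorem interchangeable_iff (n k : ℕ) (hn : 3 ≤ n) (hk1 : 1 ≤ k) (hkn : k < n)
    (i j : ZMod n) (x y : Fin k → ZMod 2) :
    (∃ α ∈ scriptA n k, α (i, x) = (j, y) ∧ α (j, y) = (i, x)) ↔
      (j = i) ∨
      (j ≠ i ∧ ∀ m : ZMod n, ∀ (hmi : (m - i).val < k) (hmj : (m - j).val < k),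
        (x ⟨k - 1 - (m - j).val, by omega⟩ = y ⟨(m - j).val, hmj⟩ ↔
          y ⟨k - 1 - (m - i).val, by omega⟩ = x ⟨(m - i).val, hmi⟩)) ∨
      (Even n ∧ j = i + ((n / 2 : ℕ) : ZMod n) ∧
        ∀ m : ZMod n, ∀ (hmi : (m - i).val < k) (hmj : (m - j).val < k),
          (x ⟨(m - j).val, hmj⟩ = y ⟨(m - j).val, hmj⟩ ↔
            y ⟨(m - i).val, hmi⟩ = x ⟨(m - i).val, hmi⟩)) := by
  haveI : NeZero n := ⟨by omega⟩
  constructor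
  · rintro ⟨α, hA, hxy, hyx⟩
    obtain ⟨ε, a, f, hα⟩ := PXA.nice_of_mem n k hkn hA
    rw [hα] at hxy hyx
    cases ε
    · simp only [PXA.phiFun, Bool.cond_false, Prod.mk.injEq, funext_iff] at hxy hyx
      obtain ⟨hij, hxyt⟩ := hxy
      obtain ⟨hji, hyxt⟩ := hyx
      have h2 : (j - i) + (j - i) = 0 := by linear_combination hji - hij
      rcases PXA.half_lemma n (by omega) (j - i) h2 with hz | ⟨hev, hz⟩
      · exact Or.inl (sub_eq_zero.mp hz)
      · by_cases hji0 : j = i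
        · exact Or.inl hji0
        · refine Or.inr (Or.inr ⟨hev, by linear_combination hz, fun m hmi hmj => ?_⟩)
          have ha : a = j - i := by linear_combination hij
          have hm1 : i + a + (((m - j).val : ℕ) : ZMod n) = m := by
            rw [ZMod.natCast_val, ZMod.cast_id, ha]; ring
          have hm2 : j + a + (((m - i).val : ℕ) : ZMod n) = m := by
            rw [ZMod.natCast_val, ZMod.cast_id, ha]; linear_combination h2
          have e1 : x ⟨(m - j).val, hmj⟩ + f (i + a + (((m - j).val : ℕ) : ZMod n)) =
              y ⟨(m - j).val, hmj⟩ := hxyt ⟨(m - j).val, hmj⟩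
          rw [hm1] at e1
          have e2 : y ⟨(m - i).val, hmi⟩ + f (j + a + (((m - i).val : ℕ) : ZMod n)) =
              x ⟨(m - i).val, hmi⟩ := hyxt ⟨(m - i).val, hmi⟩
          rw [hm2] at e2
          exact PXA.iff_of _ _ _ _ _ e1.symm e2.symm
    · simp only [PXA.phiFun, Bool.cond_true, Prod.mk.injEq, funext_iff] at hxy hyx
      obtain ⟨hij, hxyt⟩ := hxy
      obtain ⟨hji, hyxt⟩ := hyx
      by_cases hji0 : j = i
      · exact Or.inl hji0
      · refine Or.inr (Or.inl ⟨hji0, fun m hmi hmj => ?_⟩)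
        have hm1 : -i + a + (((m - j).val : ℕ) : ZMod n) = m := by
          rw [ZMod.natCast_val, ZMod.cast_id]; linear_combination hij
        have hm2 : -j + a + (((m - i).val : ℕ) : ZMod n) = m := by
          rw [ZMod.natCast_val, ZMod.cast_id]; linear_combination hji
        have e1 : x (⟨(m - j).val, hmj⟩ : Fin k).rev +
            f (-i + a + (((m - j).val : ℕ) : ZMod n)) =
            y ⟨(m - j).val, hmj⟩ := hxyt ⟨(m - j).val, hmj⟩
        rw [hm1, PXA.rev_mk _ (by omega)] at e1
        have e2 : y (⟨(m - i).val, hmi⟩ : Fin k).rev +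
            f (-j + a + (((m - i).val : ℕ) : ZMod n)) =
            x ⟨(m - i).val, hmi⟩ := hyxt ⟨(m - i).val, hmi⟩
        rw [hm2, PXA.rev_mk _ (by omega)] at e2
        exact PXA.iff_of _ _ _ _ _ e1.symm e2.symm
  · rintro (h1 | ⟨hne, hcond⟩ | ⟨hev, hjj, hcond⟩)
    · -- case j = i
      subst h1
      refine ⟨PXA.phiPerm n k false 0
        (fun m => if h : (m - j).val < k then x ⟨(m - j).val, h⟩ + y ⟨(m - j).val, h⟩ else 0),
        PXA.phi_mem n k hkn _ _ _, ?_, ?_⟩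
      · refine Prod.ext (by show j + 0 = j; ring) ?_
        funext t
        simp only [PXA.phiPerm_apply, PXA.phiFun, Bool.cond_false]
        have hval : (j + 0 + ((t:ℕ):ZMod n) - j).val = (t:ℕ) := by
          rw [show j + 0 + ((t:ℕ):ZMod n) - j = ((t:ℕ):ZMod n) by ring,
            ZMod.val_natCast_of_lt (lt_trans t.is_lt hkn)]
        simp only [hval]
        rw [dif_pos t.is_lt]
        simp only [Fin.eta]
        exact PXA.aab _ _
      · refine Prod.ext (by show j + 0 = j; ring) ?_
        funext t
        simp only [PXA.phiPerm_apply, PXA.phiFun, Bool.cond_false]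
        have hval : (j + 0 + ((t:ℕ):ZMod n) - j).val = (t:ℕ) := by
          rw [show j + 0 + ((t:ℕ):ZMod n) - j = ((t:ℕ):ZMod n) by ring,
            ZMod.val_natCast_of_lt (lt_trans t.is_lt hkn)]
        simp only [hval]
        rw [dif_pos t.is_lt]
        simp only [Fin.eta]
        exact PXA.bab _ _
    · -- case reflection
      refine ⟨PXA.phiPerm n k true (i + j)
        (fun m => if h : (m - j).val < k then
            x ⟨k - 1 - (m - j).val, by omega⟩ + y ⟨(m - j).val, h⟩
          else if h : (m - i).val < k then
            y ⟨k - 1 - (m - i).val, by omega⟩ + x ⟨(m - i).val, h⟩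
          else 0),
        PXA.phi_mem n k hkn _ _ _, ?_, ?_⟩
      · refine Prod.ext (by show -i + (i + j) = j; ring) ?_
        funext t
        simp only [PXA.phiPerm_apply, PXA.phiFun, Bool.cond_true]
        have harg : -i + (i + j) + ((t:ℕ):ZMod n) = j + ((t:ℕ):ZMod n) := by ring
        simp only [harg]
        have hvalj : (j + ((t:ℕ):ZMod n) - j).val = (t:ℕ) := by
          rw [show j + ((t:ℕ):ZMod n) - j = ((t:ℕ):ZMod n) by ring,
            ZMod.val_natCast_of_lt (lt_trans t.is_lt hkn)]
        simp only [hvalj]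
        rw [dif_pos t.is_lt, PXA.rev_mk t (by omega)]
        simp only [Fin.eta]
        exact PXA.aab _ _
      · refine Prod.ext (by show -j + (i + j) = i; ring) ?_
        funext t
        simp only [PXA.phiPerm_apply, PXA.phiFun, Bool.cond_true]
        have harg : -j + (i + j) + ((t:ℕ):ZMod n) = i + ((t:ℕ):ZMod n) := by ring
        simp only [harg]
        have hvali : (i + ((t:ℕ):ZMod n) - i).val = (t:ℕ) := by
          rw [show i + ((t:ℕ):ZMod n) - i = ((t:ℕ):ZMod n) by ring,
            ZMod.val_natCast_of_lt (lt_trans t.is_lt hkn)]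
        by_cases hmj : ((i + ((t:ℕ):ZMod n)) - j).val < k
        · rw [dif_pos hmj]
          have hs := PXA.sum_eq _ _ _ _
            (hcond (i + ((t:ℕ):ZMod n)) (by rw [hvali]; exact t.is_lt) hmj)
          simp only [hvali, Fin.eta] at hs
          rw [PXA.rev_mk t (by omega), hs]
          exact PXA.aab _ _
        · rw [dif_neg hmj]
          simp only [hvali]
          rw [dif_pos t.is_lt, PXA.rev_mk t (by omega)]
          simp only [Fin.eta]
          exact PXA.aab _ _
    · -- case half turn
      subst hjj
      obtain ⟨r, hr⟩ := hev
      have hsum : n / 2 + n / 2 = n := by omega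
      have hcc : ((n/2 : ℕ) : ZMod n) + ((n/2 : ℕ) : ZMod n) = 0 := by
        rw [← Nat.cast_add, hsum, ZMod.natCast_self]
      refine ⟨PXA.phiPerm n k false ((n/2 : ℕ) : ZMod n)
        (fun m => if h : (m - (i + ((n/2 : ℕ) : ZMod n))).val < k then
            x ⟨(m - (i + ((n/2 : ℕ) : ZMod n))).val, h⟩ +
            y ⟨(m - (i + ((n/2 : ℕ) : ZMod n))).val, h⟩
          else if h : (m - i).val < k then
            y ⟨(m - i).val, h⟩ + x ⟨(m - i).val, h⟩
          else 0),
        PXA.phi_mem n k hkn _ _ _, ?_, ?_⟩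
      · refine Prod.ext rfl ?_
        funext t
        simp only [PXA.phiPerm_apply, PXA.phiFun, Bool.cond_false]
        have hvalj : (i + ((n/2 : ℕ) : ZMod n) + ((t:ℕ):ZMod n) -
            (i + ((n/2 : ℕ) : ZMod n))).val = (t:ℕ) := by
          rw [show i + ((n/2 : ℕ) : ZMod n) + ((t:ℕ):ZMod n) - (i + ((n/2 : ℕ) : ZMod n)) =
            ((t:ℕ):ZMod n) by ring, ZMod.val_natCast_of_lt (lt_trans t.is_lt hkn)]
        simp only [hvalj]
        rw [dif_pos t.is_lt]
        simp only [Fin.eta]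
        exact PXA.aab _ _
      · refine Prod.ext ?_ ?_
        · show i + ((n/2:ℕ):ZMod n) + ((n/2:ℕ):ZMod n) = i
          linear_combination hcc
        funext t
        simp only [PXA.phiPerm_apply, PXA.phiFun, Bool.cond_false]
        have harg : i + ((n/2:ℕ):ZMod n) + ((n/2:ℕ):ZMod n) + ((t:ℕ):ZMod n) =
            i + ((t:ℕ):ZMod n) := by linear_combination hcc
        simp only [harg]
        have hvali : (i + ((t:ℕ):ZMod n) - i).val = (t:ℕ) := by
          rw [show i + ((t:ℕ):ZMod n) - i = ((t:ℕ):ZMod n) by ring,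
            ZMod.val_natCast_of_lt (lt_trans t.is_lt hkn)]
        by_cases hmj : ((i + ((t:ℕ):ZMod n)) - (i + ((n/2 : ℕ) : ZMod n))).val < k
        · rw [dif_pos hmj]
          have hs := PXA.sum_eq _ _ _ _
            (hcond (i + ((t:ℕ):ZMod n)) (by rw [hvali]; exact t.is_lt) hmj)
          simp only [hvali, Fin.eta] at hs
          rw [hs]
          exact PXA.aab _ _
        · rw [dif_neg hmj]
          simp only [hvali]
          rw [dif_pos t.is_lt]
          simp only [Fin.eta]
          exact PXA.aab _ _
end

section
/- Let n ≥ 3, 1 ≤ k < n, let z = (0, 00⋯0) be the vertex of PX(n,k) with first coordinate 0 and all-zero bitstring, let v = (j,y) be any vertex, and let M = {0, 1, …, k-1} ∩ {j, j+1, …, j+k-1} ⊆ ZMod n (for m ∈ M the differences m and m - j, computed in ZMod n, lie in {0,…,k-1} and are used as bitstring indices). Then z and v are interchangeable by some α ∈ 𝒜 if and only if one of the following holds: (1) j = 0; (2) j ≠ 0 and for all m ∈ M, y_{m-j} = y_{k-1-m}; (3) n is even, j = n/2, and for all m ∈ M, y_{m-j} = y_m. -/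
namespace PXaux

variable {n k : ℕ}

def affMap (n k : ℕ) (f : ZMod n → ZMod 2) (a : ZMod n) (ε : Bool) :
    ZMod n × (Fin k → ZMod 2) → ZMod n × (Fin k → ZMod 2) :=
  fun v => cond ε (a - v.1, fun t => v.2 t.rev + f (a - v.1 + ((t : ℕ) : ZMod n)))
           (v.1 + a, fun t => v.2 t + f (v.1 + a + ((t : ℕ) : ZMod n)))

lemma rev_cast (hk : 1 ≤ k) (t : Fin k) :
    ((t.rev : ℕ) : ZMod n) = ((k - 1 : ℕ) : ZMod n) - ((t : ℕ) : ZMod n) := by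
  have h : (t.rev : ℕ) = (k - 1) - (t : ℕ) := by
    have := t.isLt
    simp [Fin.val_rev]
    omega
  rw [h, Nat.cast_sub (by have := t.isLt; omega)]

lemma aff_comp (hk : 1 ≤ k) (f g : ZMod n → ZMod 2) (a b : ZMod n) (ε δ : Bool)
    (v : ZMod n × (Fin k → ZMod 2)) :
    affMap n k f a ε (affMap n k g b δ v) =
    affMap n k
      (fun u => cond ε (g ((a + ((k - 1 : ℕ) : ZMod n)) - u)) (g (u - a)) + f u)
      (cond ε (a - b) (a + b)) (xor δ ε) v := by
  obtain ⟨i, x⟩ := v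
  cases ε <;> cases δ <;>
    simp only [affMap, Bool.xor_false, Bool.xor_true, Bool.not_false, Bool.not_true,
      Bool.cond_true, Bool.cond_false] <;>
    refine Prod.ext (by dsimp only; ring) ?_ <;> funext t <;> dsimp only
  · ring_nf
  · ring_nf
  · rw [rev_cast hk]; ring_nf
  · rw [Fin.rev_rev, rev_cast hk]; ring_nf

lemma aff_id (v : ZMod n × (Fin k → ZMod 2)) : affMap n k 0 0 false v = v := by
  obtain ⟨i, x⟩ := v
  simp [affMap]

/-- The subgroup of "affine" permutations. -/
def affGroup (n k : ℕ) (hk : 1 ≤ k) : Subgroup (Equiv.Perm (ZMod n × (Fin k → ZMod 2))) where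
  carrier := {α | ∃ (f : ZMod n → ZMod 2) (a : ZMod n) (ε : Bool), ∀ v, α v = affMap n k f a ε v}
  one_mem' := ⟨0, 0, false, fun v => (aff_id v).symm⟩
  mul_mem' := by
    rintro α β ⟨f, a, ε, hα⟩ ⟨g, b, δ, hβ⟩
    exact ⟨_, _, _, fun v => by
      rw [Equiv.Perm.mul_apply, hβ, hα, aff_comp hk]⟩
  inv_mem' := by
    rintro α ⟨f, a, ε, hα⟩
    have key : ∀ w, α (affMap n k
        (cond ε (fun u => f ((a + ((k - 1 : ℕ) : ZMod n)) - u)) (fun u => f (u + a)))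
        (cond ε a (-a)) ε w) = w := by
      intro w
      rw [hα, aff_comp hk]
      cases ε <;> simp only [Bool.cond_true, Bool.cond_false, Bool.xor_true, Bool.xor_false,
        Bool.not_true, Bool.not_false]
      · have : ∀ u : ZMod n, f (u - a + a) + f u = 0 := fun u => by
          rw [sub_add_cancel]; exact CharTwo.add_self_eq_zero _
        calc affMap n k (fun u => f (u - a + a) + f u) (a + -a) false w
            = affMap n k 0 0 false w := by
              rw [add_neg_cancel]; congr 1; funext u; rw [this]; rfl
          _ = w := aff_id w
      · have : ∀ u : ZMod n, f (a + ((k - 1 : ℕ) : ZMod n) - (a + ((k - 1 : ℕ) : ZMod n) - u)) + f u = 0 := fun u => by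
          rw [sub_sub_cancel]; exact CharTwo.add_self_eq_zero _
        calc affMap n k (fun u => f (a + ((k - 1 : ℕ) : ZMod n) - (a + ((k - 1 : ℕ) : ZMod n) - u)) + f u) (a - a) false w
            = affMap n k 0 0 false w := by
              rw [sub_self]; congr 1; funext u; rw [this]; rfl
          _ = w := aff_id w
    refine ⟨cond ε (fun u => f ((a + ((k - 1 : ℕ) : ZMod n)) - u)) (fun u => f (u + a)),
      cond ε a (-a), ε, fun v => ?_⟩
    have h2 := key v
    calc α⁻¹ v = α⁻¹ (α (affMap n k
        (cond ε (fun u => f ((a + ((k - 1 : ℕ) : ZMod n)) - u)) (fun u => f (u + a)))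
        (cond ε a (-a)) ε v)) := by rw [h2]
      _ = _ := Equiv.symm_apply_apply α _



variable (n k : ℕ)

lemma mu_apply (v : ZMod n × (Fin k → ZMod 2)) :
    muPerm n k v = (-v.1, fun t => v.2 t.rev) := rfl

lemma rho_pow_apply (m : ℕ) (v : ZMod n × (Fin k → ZMod 2)) :
    ((rhoPerm n k) ^ m) v = (v.1 + (m : ZMod n), v.2) := by
  induction m with
  | zero => simp [rhoPerm]
  | succ m ih =>
    rw [pow_succ', Equiv.Perm.mul_apply, ih]
    show (v.1 + (m : ZMod n) + 1, v.2) = _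
    refine Prod.ext ?_ rfl
    push_cast
    ring

lemma tau_apply [NeZero n] (hkn : k ≤ n) (s : ZMod n) (v : ZMod n × (Fin k → ZMod 2)) :
    tauPerm n k s v = (v.1, fun t => v.2 t +
      (if v.1 + ((t : ℕ) : ZMod n) = s then 1 else 0)) := by
  obtain ⟨i, x⟩ := v
  refine Prod.ext rfl ?_
  funext t
  show (if (s - i).val < k ∧ (t : ℕ) = (s - i).val then x t + 1 else x t) = _
  dsimp only
  have hiff : ((s - i).val < k ∧ (t : ℕ) = (s - i).val) ↔ i + ((t : ℕ) : ZMod n) = s := by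
    constructor
    · rintro ⟨h1, h2⟩
      have : ((t : ℕ) : ZMod n) = s - i := by
        rw [h2, ZMod.natCast_zmod_val]
      rw [this]; ring
    · intro h
      have hs : s - i = ((t : ℕ) : ZMod n) := by rw [← h]; ring
      have hv : (s - i).val = (t : ℕ) := by
        rw [hs, ZMod.val_cast_of_lt (lt_of_lt_of_le t.isLt hkn)]
      exact ⟨hv ▸ t.isLt, hv.symm⟩
  by_cases h : i + ((t : ℕ) : ZMod n) = s
  · rw [if_pos (hiff.mpr h), if_pos h]
  · rw [if_neg (fun hc => h (hiff.mp hc)), if_neg h, add_zero]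

lemma tau_comm (s u : ZMod n) : Commute (tauPerm n k s) (tauPerm n k u) := by
  have key : ∀ a : ZMod 2, a + 1 + 1 = a := by decide
  apply Equiv.ext
  rintro ⟨i, x⟩
  show (tauPerm n k s) ((tauPerm n k u) (i, x)) = (tauPerm n k u) ((tauPerm n k s) (i, x))
  show ((i : ZMod n), fun t : Fin k => if (s - i).val < k ∧ (t : ℕ) = (s - i).val then
      (if (u - i).val < k ∧ (t : ℕ) = (u - i).val then x t + 1 else x t) + 1
      else (if (u - i).val < k ∧ (t : ℕ) = (u - i).val then x t + 1 else x t)) =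
    ((i : ZMod n), fun t : Fin k => if (u - i).val < k ∧ (t : ℕ) = (u - i).val then
      (if (s - i).val < k ∧ (t : ℕ) = (s - i).val then x t + 1 else x t) + 1
      else (if (s - i).val < k ∧ (t : ℕ) = (s - i).val then x t + 1 else x t))
  refine Prod.ext rfl ?_
  funext t
  dsimp only
  split_ifs <;> rfl

/-- Product of `τ_s` over a finite set. -/
def tauProd (F : Finset (ZMod n)) : Equiv.Perm (ZMod n × (Fin k → ZMod 2)) :=
  F.noncommProd (tauPerm n k) (fun s _ u _ _ => tau_comm n k s u)

lemma tauProd_mem (F : Finset (ZMod n)) : tauProd n k F ∈ scriptA n k :=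
  Subgroup.noncommProd_mem _ _ (fun s _ => Subgroup.subset_closure (Or.inr ⟨s, rfl⟩))

lemma tauProd_apply [NeZero n] (hkn : k ≤ n) (F : Finset (ZMod n))
    (v : ZMod n × (Fin k → ZMod 2)) :
    tauProd n k F v = (v.1, fun t => v.2 t +
      (if v.1 + ((t : ℕ) : ZMod n) ∈ F then 1 else 0)) := by
  classical
  induction F using Finset.induction with
  | empty => simp [tauProd]; rfl
  | insert _ _ hs =>
    rename_i s F ih
    rw [tauProd]; erw [Finset.noncommProd_insert_of_notMem _ _ _ _ hs]; rw [Equiv.Perm.mul_apply,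
      ← tauProd, ih, tau_apply n k hkn]
    refine Prod.ext rfl ?_
    funext t
    dsimp only
    by_cases h1 : v.1 + ((t : ℕ) : ZMod n) = s
    · have hF : v.1 + ((t : ℕ) : ZMod n) ∉ F := by rw [h1]; exact hs
      rw [if_pos h1, if_neg hF, if_pos (Finset.mem_insert.mpr (Or.inl h1))]
      ring
    · rw [if_neg h1]
      by_cases h2 : v.1 + ((t : ℕ) : ZMod n) ∈ F
      · rw [if_pos h2, if_pos (Finset.mem_insert.mpr (Or.inr h2))]; ring
      · rw [if_neg h2, if_neg (fun hc => (Finset.mem_insert.mp hc).elim h1 h2)]; ring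

lemma indicator_eq (a : ZMod 2) : (if a = 1 then (1 : ZMod 2) else 0) = a := by
  revert a; decide

lemma exists_mem_scriptA [NeZero n] (hkn : k ≤ n) (f : ZMod n → ZMod 2) (a : ZMod n)
    (ε : Bool) : ∃ α ∈ scriptA n k, ∀ v, α v = affMap n k f a ε v := by
  classical
  refine ⟨tauProd n k (Finset.univ.filter (fun u => f u = 1)) * (rhoPerm n k) ^ a.val *
    (muPerm n k) ^ (cond ε 1 0), ?_, ?_⟩
  · refine mul_mem (mul_mem (tauProd_mem n k _)
      (pow_mem (Subgroup.subset_closure ?_) _))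
      (pow_mem (Subgroup.subset_closure ?_) _)
    · exact Set.mem_union_left _ (Set.mem_insert _ _)
    · exact Set.mem_union_left _ (Set.mem_insert_of_mem _ rfl)
  · intro v
    obtain ⟨i, x⟩ := v
    cases ε
    · simp only [Bool.cond_false, pow_zero, Equiv.Perm.mul_apply, Equiv.Perm.one_apply]
      rw [rho_pow_apply, tauProd_apply n k hkn, ZMod.natCast_zmod_val]
      refine Prod.ext rfl ?_
      funext t
      simp only [affMap, Bool.cond_false, Finset.mem_filter, Finset.mem_univ, true_and]
      rw [indicator_eq]
    · simp only [Bool.cond_true, pow_one, Equiv.Perm.mul_apply]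
      rw [mu_apply, rho_pow_apply, tauProd_apply n k hkn, ZMod.natCast_zmod_val]
      simp only [affMap, Bool.cond_true, Finset.mem_filter, Finset.mem_univ, true_and]
      have e : -i + a = a - i := by ring
      refine Prod.ext (by dsimp only; ring) ?_
      funext t
      dsimp only
      rw [indicator_eq, e]

lemma scriptA_le_affGroup [NeZero n] (hk : 1 ≤ k) (hkn : k ≤ n) :
    scriptA n k ≤ affGroup n k hk := by
  rw [scriptA, Subgroup.closure_le]
  intro α hα
  simp only [Set.mem_union, Set.mem_insert_iff, Set.mem_singleton_iff, Set.mem_range] at hα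
  rcases hα with (rfl | rfl) | ⟨s, rfl⟩
  · exact ⟨0, 1, false, fun v => by
      obtain ⟨i, x⟩ := v
      simp [rhoPerm, affMap]⟩
  · exact ⟨0, 0, true, fun v => by
      obtain ⟨i, x⟩ := v
      simp [mu_apply, affMap, zero_sub]⟩
  · exact ⟨fun u => if u = s then 1 else 0, 0, false, fun v => by
      rw [tau_apply n k hkn]
      obtain ⟨i, x⟩ := v
      simp [affMap]⟩


end PXaux

open PXaux in
/-- The vertex `z = (0, 00⋯0)` and a vertex `v = (j,y)` of `PX(n,k)` are interchangeable
by some `α ∈ 𝒜` iff (1) `j = 0`; or (2) `j ≠ 0` and for all `m ∈ M`, `y_{m-j} = y_{k-1-m}`;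
or (3) `j = n/2` (`n` even) and for all `m ∈ M`, `y_{m-j} = y_m`, where
`M = {0,…,k-1} ∩ {j,…,j+k-1} ⊆ ZMod n`. -/
theorem zero_interchangeable_iff (n k : ℕ) (hn : 3 ≤ n) (hk1 : 1 ≤ k) (hkn : k < n)
    (j : ZMod n) (y : Fin k → ZMod 2) :
    (∃ α ∈ scriptA n k, α ((0 : ZMod n), fun _ => (0 : ZMod 2)) = (j, y) ∧
        α (j, y) = ((0 : ZMod n), fun _ => (0 : ZMod 2))) ↔
      (j = 0) ∨
      (j ≠ 0 ∧ ∀ m : ZMod n, ∀ (hm : m.val < k) (hmj : (m - j).val < k),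
        y ⟨(m - j).val, hmj⟩ = y ⟨k - 1 - m.val, by omega⟩) ∨
      (Even n ∧ j = ((n / 2 : ℕ) : ZMod n) ∧
        ∀ m : ZMod n, ∀ (hm : m.val < k) (hmj : (m - j).val < k),
          y ⟨(m - j).val, hmj⟩ = y ⟨m.val, hm⟩) := by
  haveI : NeZero n := ⟨by omega⟩
  have keyadd : ∀ a : ZMod 2, a + a = 0 := by decide
  have key2 : ∀ a b : ZMod 2, a + b = 0 → b = a := by decide
  constructor
  · rintro ⟨α, hmem, h1, h2⟩
    obtain ⟨f, a, ε, hα⟩ := scriptA_le_affGroup n k hk1 (le_of_lt hkn) hmem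
    rw [hα] at h1 h2
    by_cases hj : j = 0
    · exact Or.inl hj
    cases ε
    · -- ε = false : τ-translate case, 2j = 0
      simp only [affMap, Bool.cond_false] at h1 h2
      rw [Prod.ext_iff] at h1 h2
      obtain ⟨ha, hy1⟩ := h1
      obtain ⟨hb, hy2⟩ := h2
      dsimp only at ha hb hy1 hy2
      rw [zero_add] at ha
      subst ha
      have hy1' : ∀ t : Fin k, y t = f (a + ((t : ℕ) : ZMod n)) := fun t => by
        have h := congrFun hy1 t
        rw [zero_add, zero_add] at h
        exact h.symm
      have hy2' : ∀ t : Fin k, f ((t : ℕ) : ZMod n) = y t := fun t => by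
        have h := congrFun hy2 t
        rw [hb, zero_add] at h
        exact key2 _ _ h
      have hvlt : a.val < n := ZMod.val_lt a
      have hvne : a.val ≠ 0 := by
        intro h0
        exact hj (by rw [← ZMod.natCast_zmod_val a, h0, Nat.cast_zero])
      have hsum : a.val + a.val = n := by
        have hc : ((a.val + a.val : ℕ) : ZMod n) = 0 := by
          push_cast [ZMod.natCast_zmod_val]
          exact hb
        obtain ⟨c, hc2⟩ := (ZMod.natCast_eq_zero_iff _ _).mp hc
        rcases c with _ | c
        · omega
        · rw [Nat.mul_succ] at hc2
          have hc0 : c = 0 := by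
            by_contra hcc
            have : n * 1 ≤ n * c := Nat.mul_le_mul_left n (by omega)
            omega
          subst hc0
          omega
      refine Or.inr (Or.inr ⟨⟨a.val, by omega⟩, ?_, ?_⟩)
      · rw [← ZMod.natCast_zmod_val a]
        congr 1
        omega
      · intro m hm hmj
        have e1 : y ⟨(m - a).val, hmj⟩ = f m := by
          rw [hy1' ⟨(m - a).val, hmj⟩]
          congr 1
          show a + (((m - a).val : ℕ) : ZMod n) = m
          rw [ZMod.natCast_zmod_val]
          ring
        have e2 : y ⟨m.val, hm⟩ = f m := by
          rw [← hy2' ⟨m.val, hm⟩]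
          congr 1
          exact ZMod.natCast_zmod_val m
        rw [e1, e2]
    · -- ε = true : reflection case
      simp only [affMap, Bool.cond_true] at h1 h2
      rw [Prod.ext_iff] at h1 h2
      obtain ⟨ha, hy1⟩ := h1
      obtain ⟨hb, hy2⟩ := h2
      dsimp only at ha hb hy1 hy2
      rw [sub_zero] at ha
      subst ha
      have hy1' : ∀ t : Fin k, y t = f (a + ((t : ℕ) : ZMod n)) := fun t => by
        have h := congrFun hy1 t
        rw [zero_add, sub_zero] at h
        exact h.symm
      have hy2' : ∀ t : Fin k, f ((t : ℕ) : ZMod n) = y t.rev := fun t => by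
        have h := congrFun hy2 t
        rw [sub_self, zero_add] at h
        exact key2 _ _ h
      refine Or.inr (Or.inl ⟨hj, ?_⟩)
      intro m hm hmj
      have e1 : y ⟨(m - a).val, hmj⟩ = f m := by
        rw [hy1' ⟨(m - a).val, hmj⟩]
        congr 1
        show a + (((m - a).val : ℕ) : ZMod n) = m
        rw [ZMod.natCast_zmod_val]
        ring
      have e2 : y ⟨k - 1 - m.val, by omega⟩ = f m := by
        have h := hy2' ⟨m.val, hm⟩
        rw [show (((⟨m.val, hm⟩ : Fin k) : ℕ) : ZMod n) = m from ZMod.natCast_zmod_val m] at h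
        rw [h]
        congr 1
        rw [Fin.ext_iff, Fin.val_rev]
        show k - 1 - m.val = k - (m.val + 1)
        omega
      rw [e1, e2]
  · have hval : ∀ t : Fin k, (((t : ℕ) : ZMod n)).val = (t : ℕ) :=
      fun t => ZMod.val_cast_of_lt (lt_trans t.isLt hkn)
    rintro (rfl | ⟨hj, hc⟩ | ⟨hev, hj2, hc⟩)
    · -- case j = 0
      obtain ⟨α, hmem, hα⟩ := exists_mem_scriptA n k (le_of_lt hkn)
        (fun u => if h : u.val < k then y ⟨u.val, h⟩ else 0) 0 false
      have hfy : ∀ t : Fin k, (if h : (((t : ℕ) : ZMod n)).val < k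
          then y ⟨(((t : ℕ) : ZMod n)).val, h⟩ else 0) = y t := by
        intro t
        have hcc : (((t : ℕ) : ZMod n)).val < k := by rw [hval t]; exact t.isLt
        rw [dif_pos hcc]
        congr 1
        exact Fin.ext (hval t)
      refine ⟨α, hmem, ?_, ?_⟩ <;> rw [hα] <;>
        simp only [affMap, Bool.cond_false] <;>
        refine Prod.ext (by dsimp only; ring) ?_ <;> funext t <;> dsimp only <;>
        rw [show (0 : ZMod n) + 0 + ((t : ℕ) : ZMod n) = ((t : ℕ) : ZMod n) by ring, hfy t]
      · rw [zero_add]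
      · exact keyadd _
    · -- case j ≠ 0, reflection
      obtain ⟨α, hmem, hα⟩ := exists_mem_scriptA n k (le_of_lt hkn)
        (fun u => if h : (u - j).val < k then y ⟨(u - j).val, h⟩
          else if h' : u.val < k then y ⟨k - 1 - u.val, by omega⟩ else 0) j true
      refine ⟨α, hmem, ?_, ?_⟩ <;> rw [hα] <;> simp only [affMap, Bool.cond_true]
      · refine Prod.ext (by dsimp only; ring) ?_
        funext t
        dsimp only
        rw [show j - 0 + ((t : ℕ) : ZMod n) - j = ((t : ℕ) : ZMod n) by ring]
        have hcc : (((t : ℕ) : ZMod n)).val < k := by rw [hval t]; exact t.isLt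
        rw [dif_pos hcc, zero_add]
        congr 1
        exact Fin.ext (hval t)
      · refine Prod.ext (by dsimp only; ring) ?_
        funext t
        dsimp only
        rw [show j - j + ((t : ℕ) : ZMod n) - j = ((t : ℕ) : ZMod n) - j by ring,
          show j - j + ((t : ℕ) : ZMod n) = ((t : ℕ) : ZMod n) by ring]
        have hrev : y t.rev = y ⟨k - 1 - (t : ℕ), by omega⟩ := by
          congr 1
          rw [Fin.ext_iff, Fin.val_rev]
          show k - ((t : ℕ) + 1) = k - 1 - (t : ℕ)
          omega
        by_cases h : ((((t : ℕ) : ZMod n)) - j).val < k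
        · rw [dif_pos h]
          have := hc ((t : ℕ) : ZMod n) (by rw [hval t]; exact t.isLt) h
          rw [this]
          have e3 : y ⟨k - 1 - (((t : ℕ) : ZMod n)).val, by omega⟩
              = y ⟨k - 1 - (t : ℕ), by omega⟩ := by
            congr 1
            rw [Fin.ext_iff]
            dsimp only
            rw [hval t]
          rw [e3, ← hrev]
          exact keyadd _
        · rw [dif_neg h]
          have hcc : (((t : ℕ) : ZMod n)).val < k := by rw [hval t]; exact t.isLt
          rw [dif_pos hcc]
          have e3 : y ⟨k - 1 - (((t : ℕ) : ZMod n)).val, by omega⟩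
              = y ⟨k - 1 - (t : ℕ), by omega⟩ := by
            congr 1
            rw [Fin.ext_iff]
            dsimp only
            rw [hval t]
          rw [e3, ← hrev]
          exact keyadd _
    · -- case n even, j = n/2
      subst hj2
      have twoj : ((n / 2 : ℕ) : ZMod n) + ((n / 2 : ℕ) : ZMod n) = 0 := by
        obtain ⟨r, hr⟩ := hev
        rw [← Nat.cast_add, show n / 2 + n / 2 = n by omega, ZMod.natCast_self]
      set j : ZMod n := ((n / 2 : ℕ) : ZMod n) with hjdef
      obtain ⟨α, hmem, hα⟩ := exists_mem_scriptA n k (le_of_lt hkn)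
        (fun u => if h : (u - j).val < k then y ⟨(u - j).val, h⟩
          else if h' : u.val < k then y ⟨u.val, h'⟩ else 0) j false
      refine ⟨α, hmem, ?_, ?_⟩ <;> rw [hα] <;> simp only [affMap, Bool.cond_false]
      · refine Prod.ext (by dsimp only; ring) ?_
        funext t
        dsimp only
        rw [show (0 : ZMod n) + j + ((t : ℕ) : ZMod n) - j = ((t : ℕ) : ZMod n) by ring]
        have hcc : (((t : ℕ) : ZMod n)).val < k := by rw [hval t]; exact t.isLt
        rw [dif_pos hcc, zero_add]
        congr 1
        exact Fin.ext (hval t)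
      · refine Prod.ext (by dsimp only; rw [twoj]) ?_
        funext t
        dsimp only
        rw [show j + j + ((t : ℕ) : ZMod n) = ((t : ℕ) : ZMod n) by rw [twoj]; ring]
        have hcc : (((t : ℕ) : ZMod n)).val < k := by rw [hval t]; exact t.isLt
        by_cases h : ((((t : ℕ) : ZMod n)) - j).val < k
        · rw [dif_pos h]
          have := hc ((t : ℕ) : ZMod n) (by rw [hval t]; exact t.isLt) h
          rw [this]
          have e3 : y ⟨(((t : ℕ) : ZMod n)).val, hcc⟩ = y t := by
            congr 1
            exact Fin.ext (hval t)
          rw [e3]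
          exact keyadd _
        · rw [dif_neg h, dif_pos hcc]
          have e3 : y ⟨(((t : ℕ) : ZMod n)).val, hcc⟩ = y t := by
            congr 1
            exact Fin.ext (hval t)
          rw [e3]
          exact keyadd _
end
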